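/- arXiv:1008.4341 — 8 statements merged into one kernel-verified Lean document; each statement's English description precedes it below -/
import Mathlib

section
/- Let X be a nonnegative real-valued random variable with E[X] < ∞. Then ∑_{n=1}^∞ (1/n²) ∑_{k=1}^n E[X · 1{k < X ≤ n}] < ∞. -/
open MeasureTheory

/-- Tail estimate: `∑_{n>j, n<N} 1/n² ≤ 1/j` for `j ≥ 1`. -/
lemma stmt_0_tail_aux (j : ℕ) (hj : 1 ≤ j) (N : ℕ) :
    ∑ n ∈ Finset.range N, (if j < n then 1 / (n : ℝ) ^ 2 else 0) ≤ 1 / (j : ℝ) := by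
  have key : ∀ M : ℕ, j ≤ M →
      ∑ n ∈ Finset.Ico (j + 1) (M + 1), (1 / (n : ℝ) ^ 2) ≤ 1 / (j : ℝ) - 1 / (M : ℝ) := by
    intro M hM
    induction M, hM using Nat.le_induction with
    | base => simp
    | succ M hM ih =>
      rw [Finset.sum_Ico_succ_top (by omega)]
      have h1 : (0 : ℝ) < M := by exact_mod_cast (by omega : 0 < M)
      have h2 : (0 : ℝ) < (M : ℝ) + 1 := by linarith
      have h3 : 1 / ((M : ℝ) + 1) ^ 2 ≤ 1 / (M : ℝ) - 1 / ((M : ℝ) + 1) := by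
        rw [div_sub_div _ _ (ne_of_gt h1) (ne_of_gt h2),
          div_le_div_iff₀ (by positivity) (by positivity)]
        nlinarith
      push_cast
      linarith
  have hfilter : (Finset.range N).filter (fun n => j < n) = Finset.Ico (j + 1) N := by
    ext n
    simp only [Finset.mem_filter, Finset.mem_range, Finset.mem_Ico]
    omega
  rw [← Finset.sum_filter, hfilter]
  rcases le_or_gt N (j + 1) with h | h
  · rw [Finset.Ico_eq_empty (by omega)]
    simp only [Finset.sum_empty]
    positivity
  · obtain ⟨M, rfl⟩ : ∃ M, N = M + 1 := ⟨N - 1, by omega⟩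
    have hjM : j ≤ M := by omega
    have hM : (0 : ℝ) < M := by exact_mod_cast (by omega : 0 < M)
    have := key M hjM
    have : (0 : ℝ) ≤ 1 / (M : ℝ) := by positivity
    linarith [key M hjM]

/-- If `X` is a nonnegative integrable random variable on a probability space, then
`∑_{n=1}^∞ (1/n²) ∑_{k=1}^n E[X · 1{k < X ≤ n}] < ∞`. -/
theorem stmt_0 {Ω : Type*} [MeasureSpace Ω] [IsProbabilityMeasure (volume : Measure Ω)]
    (X : Ω → ℝ) (hXnn : ∀ ω, 0 ≤ X ω) (hXint : Integrable X volume) :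
    Summable (fun n : ℕ =>
      (1 / (n : ℝ) ^ 2) *
        ∑ k ∈ Finset.Icc 1 n, ∫ ω in {ω | (k : ℝ) < X ω ∧ X ω ≤ (n : ℝ)}, X ω) := by
  classical
  obtain ⟨Z, hZm, hZae⟩ : ∃ Z : Ω → ℝ, StronglyMeasurable Z ∧ X =ᵐ[volume] Z :=
    ⟨hXint.1.mk X, hXint.1.stronglyMeasurable_mk, hXint.1.ae_eq_mk⟩
  set Y : Ω → ℝ := fun ω => max (Z ω) 0 with hYdef
  have hYm : Measurable Y := hZm.measurable.max measurable_const
  have hYae : X =ᵐ[volume] Y := by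
    filter_upwards [hZae] with ω h
    simp only [hYdef, ← h, max_eq_left (hXnn ω)]
  have hYnn : ∀ ω, 0 ≤ Y ω := fun ω => le_max_right _ _
  have hYint : Integrable Y volume := hXint.congr hYae
  have hset : ∀ a c : ℝ, (∫ ω in {ω | a < X ω ∧ X ω ≤ c}, X ω)
      = ∫ ω in {ω | a < Y ω ∧ Y ω ≤ c}, Y ω := by
    intro a c
    have hS : {ω | a < X ω ∧ X ω ≤ c} =ᵐ[volume] {ω | a < Y ω ∧ Y ω ≤ c} := by
      refine Filter.eventuallyEq_set.2 ?_
      filter_upwards [hYae] with ω h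
      simp [Set.mem_setOf_eq, h]
    rw [Measure.restrict_congr_set hS]
    exact integral_congr_ae (ae_restrict_of_ae hYae)
  set A : ℕ → Set Ω := fun j => Y ⁻¹' Set.Ioc (j : ℝ) ((j : ℝ) + 1) with hAdef
  have hAm : ∀ j, MeasurableSet (A j) := fun j => hYm measurableSet_Ioc
  have hAdisj : Pairwise (Function.onFun Disjoint A) := by
    intro i j hij
    simp only [Function.onFun, hAdef]
    refine Set.disjoint_left.2 fun ω hi hj => ?_
    simp only [Set.mem_preimage, Set.mem_Ioc] at hi hj
    rcases lt_or_gt_of_ne hij with h | h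
    · have : (i : ℝ) + 1 ≤ (j : ℝ) := by exact_mod_cast h
      linarith [hi.2, hj.1]
    · have : (j : ℝ) + 1 ≤ (i : ℝ) := by exact_mod_cast h
      linarith [hj.2, hi.1]
  set b : ℕ → ℝ := fun j => ∫ ω in A j, Y ω with hbdef
  have hbnn : ∀ j, 0 ≤ b j := fun j => integral_nonneg hYnn
  have hunion : ∀ k n : ℕ, 1 ≤ k →
      {ω | (k : ℝ) < Y ω ∧ Y ω ≤ (n : ℝ)} = ⋃ j ∈ Finset.Ico k n, A j := by
    intro k n hk
    ext ω
    simp only [Set.mem_setOf_eq, Set.mem_iUnion, Finset.mem_Ico, Set.mem_preimage,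
      Set.mem_Ioc, hAdef, exists_prop]
    constructor
    · rintro ⟨h1, h2⟩
      have h3 : k < ⌈Y ω⌉₊ := Nat.lt_ceil.2 h1
      have h4 : ⌈Y ω⌉₊ ≤ n := Nat.ceil_le.2 h2
      have h5 : 1 ≤ ⌈Y ω⌉₊ := by omega
      have hcast : ((⌈Y ω⌉₊ - 1 : ℕ) : ℝ) = (⌈Y ω⌉₊ : ℝ) - 1 := by
        push_cast [h5]; ring
      refine ⟨⌈Y ω⌉₊ - 1, ⟨by omega, by omega⟩, ?_, ?_⟩
      · rw [hcast]
        have := Nat.ceil_lt_add_one (hYnn ω)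
        linarith
      · rw [hcast]
        have := Nat.le_ceil (Y ω)
        linarith
    · rintro ⟨j, ⟨hkj, hjn⟩, hj1, hj2⟩
      constructor
      · have : (k : ℝ) ≤ (j : ℝ) := by exact_mod_cast hkj
        linarith
      · have : (j : ℝ) + 1 ≤ (n : ℝ) := by exact_mod_cast hjn
        linarith
  have h_inner : ∀ k n : ℕ, 1 ≤ k →
      (∫ ω in {ω | (k : ℝ) < Y ω ∧ Y ω ≤ (n : ℝ)}, Y ω) = ∑ j ∈ Finset.Ico k n, b j := by
    intro k n hk
    rw [hunion k n hk]
    exact integral_biUnion_finset _ (fun j _ => hAm j)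
      (hAdisj.set_pairwise _) (fun j _ => hYint.integrableOn)
  have h_partial : ∀ s : Finset ℕ, ∑ j ∈ s, b j ≤ ∫ ω, Y ω := by
    intro s
    rw [← integral_biUnion_finset s (fun j _ => hAm j)
      (hAdisj.set_pairwise _) (fun j _ => hYint.integrableOn)]
    exact setIntegral_le_integral hYint (Filter.Eventually.of_forall hYnn)
  have h_eq : ∀ n : ℕ,
      (∑ k ∈ Finset.Icc 1 n, ∫ ω in {ω | (k : ℝ) < X ω ∧ X ω ≤ (n : ℝ)}, X ω)
      = ∑ j ∈ Finset.Ico 1 n, (j : ℝ) * b j := by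
    intro n
    calc ∑ k ∈ Finset.Icc 1 n, ∫ ω in {ω | (k : ℝ) < X ω ∧ X ω ≤ (n : ℝ)}, X ω
        = ∑ k ∈ Finset.Icc 1 n, ∑ j ∈ Finset.Ico k n, b j := by
          refine Finset.sum_congr rfl fun k hk => ?_
          rw [hset, h_inner k n (Finset.mem_Icc.1 hk).1]
      _ = ∑ k ∈ Finset.Icc 1 n, ∑ j ∈ Finset.Ico 1 n, (if k ≤ j then b j else 0) := by
          refine Finset.sum_congr rfl fun k hk => ?_
          have hk1 := (Finset.mem_Icc.1 hk).1
          rw [show Finset.Ico k n = (Finset.Ico 1 n).filter (fun j => k ≤ j) from by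
            ext j
            simp only [Finset.mem_filter, Finset.mem_Ico]
            omega, Finset.sum_filter]
      _ = ∑ j ∈ Finset.Ico 1 n, ∑ k ∈ Finset.Icc 1 n, (if k ≤ j then b j else 0) :=
          Finset.sum_comm
      _ = ∑ j ∈ Finset.Ico 1 n, (j : ℝ) * b j := by
          refine Finset.sum_congr rfl fun j hj => ?_
          have hj' := Finset.mem_Ico.1 hj
          rw [← Finset.sum_filter]
          have hfil : (Finset.Icc 1 n).filter (fun k => k ≤ j) = Finset.Icc 1 j := by
            ext k
            simp only [Finset.mem_filter, Finset.mem_Icc]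
            omega
          rw [hfil, Finset.sum_const, Nat.card_Icc]
          simp [nsmul_eq_mul]
  have h_bound : ∀ N : ℕ, ∑ n ∈ Finset.range N,
      (1 / (n : ℝ) ^ 2) * ∑ j ∈ Finset.Ico 1 n, (j : ℝ) * b j ≤ ∫ ω, Y ω := by
    intro N
    have step1 : ∀ n ∈ Finset.range N,
        (1 / (n : ℝ) ^ 2) * ∑ j ∈ Finset.Ico 1 n, (j : ℝ) * b j
        = ∑ j ∈ Finset.Ico 1 N, ((j : ℝ) * b j) * (if j < n then 1 / (n : ℝ) ^ 2 else 0) := by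
      intro n hn
      rw [Finset.mul_sum]
      rw [show Finset.Ico 1 n = (Finset.Ico 1 N).filter (fun j => j < n) from by
        ext j
        simp only [Finset.mem_filter, Finset.mem_Ico]
        have := Finset.mem_range.1 hn
        omega, Finset.sum_filter]
      refine Finset.sum_congr rfl fun j hj => ?_
      by_cases h : j < n <;> simp [h] <;> ring
    calc ∑ n ∈ Finset.range N, (1 / (n : ℝ) ^ 2) * ∑ j ∈ Finset.Ico 1 n, (j : ℝ) * b j
        = ∑ n ∈ Finset.range N, ∑ j ∈ Finset.Ico 1 N,
            ((j : ℝ) * b j) * (if j < n then 1 / (n : ℝ) ^ 2 else 0) :=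
          Finset.sum_congr rfl step1
      _ = ∑ j ∈ Finset.Ico 1 N, ((j : ℝ) * b j) *
            ∑ n ∈ Finset.range N, (if j < n then 1 / (n : ℝ) ^ 2 else 0) := by
          rw [Finset.sum_comm]
          exact Finset.sum_congr rfl fun j _ => (Finset.mul_sum _ _ _).symm
      _ ≤ ∑ j ∈ Finset.Ico 1 N, ((j : ℝ) * b j) * (1 / (j : ℝ)) := by
          refine Finset.sum_le_sum fun j hj => ?_
          have hj1 := (Finset.mem_Ico.1 hj).1
          exact mul_le_mul_of_nonneg_left (stmt_0_tail_aux j hj1 N)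
            (mul_nonneg (by positivity) (hbnn j))
      _ = ∑ j ∈ Finset.Ico 1 N, b j := by
          refine Finset.sum_congr rfl fun j hj => ?_
          have hj1 : (0 : ℝ) < (j : ℝ) := by
            exact_mod_cast Nat.lt_of_lt_of_le Nat.zero_lt_one (Finset.mem_Ico.1 hj).1
          field_simp
      _ ≤ ∫ ω, Y ω := h_partial _
  refine summable_of_sum_range_le (c := ∫ ω, Y ω) (fun n => ?_) (fun N => ?_)
  · exact mul_nonneg (by positivity)
      (Finset.sum_nonneg fun k _ => integral_nonneg hXnn)
  · calc ∑ n ∈ Finset.range N, (1 / (n : ℝ) ^ 2) *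
          ∑ k ∈ Finset.Icc 1 n, ∫ ω in {ω | (k : ℝ) < X ω ∧ X ω ≤ (n : ℝ)}, X ω
        = ∑ n ∈ Finset.range N,
            (1 / (n : ℝ) ^ 2) * ∑ j ∈ Finset.Ico 1 n, (j : ℝ) * b j := by
          exact Finset.sum_congr rfl fun n _ => by rw [h_eq n]
      _ ≤ ∫ ω, Y ω := h_bound N
end

section
/- Let X be a nonnegative real-valued random variable with E[X] < ∞, and for n ≥ 1 define u_n = inf{t ≥ 0 : P(X > t) < 1/n}. Then ∑_{n=1}^∞ u_n / n² < ∞. -/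
/-! For `0 ≤ t < u n` the quantile satisfies `P(X > t) ≥ 1 / n`. Writing
`u n / n² = ∫_0^∞ 1{t < u n} / n² dt` and exchanging sum and integral, the sum at a fixed `t`
only runs over `n ≥ 1 / P(X > t)`, so it is at most `2 P(X > t)`. Hence
`∑ u n / n² ≤ 2 ∫_0^∞ P(X > t) dt = 2 E[X]` by the layer-cake formula. -/

open MeasureTheory Finset

lemma le_of_lt_sInf_setOf_lt {g : ℝ → ℝ} {c t : ℝ} (ht : 0 ≤ t)
    (h : t < sInf {s | 0 ≤ s ∧ g s < c}) : c ≤ g t := by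
  by_contra! hgt
  exact h.not_ge (csInf_le ⟨0, fun _ hs ↦ hs.1⟩ ⟨ht, hgt⟩)

lemma sum_range_ite_inv_sq_le {c : ℝ} (hc : 0 ≤ c) (N : ℕ) :
    ∑ n ∈ range N, (if 1 ≤ (n : ℝ) * c then ((n : ℝ) ^ 2)⁻¹ else 0) ≤ 2 * c := by
  rcases hc.eq_or_lt with rfl | hc
  · norm_num
  set k := ⌈c⁻¹⌉₊
  have hk : 0 < k := Nat.ceil_pos.mpr (inv_pos.mpr hc)
  have hck : 1 ≤ c * k := (inv_le_iff_one_le_mul₀' hc).mp (Nat.le_ceil c⁻¹)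
  have hsub : (range N).filter (fun n : ℕ ↦ 1 ≤ (n : ℝ) * c) ⊆ Ioo (k - 1) N := by
    intro n hn
    rw [mem_filter, mem_range] at hn
    have : k ≤ n := Nat.ceil_le.mpr ((inv_le_iff_one_le_mul₀ hc).mpr hn.2)
    rw [mem_Ioo]
    omega
  calc ∑ n ∈ range N, (if 1 ≤ (n : ℝ) * c then ((n : ℝ) ^ 2)⁻¹ else 0)
      = ∑ n ∈ (range N).filter (fun n : ℕ ↦ 1 ≤ (n : ℝ) * c), ((n : ℝ) ^ 2)⁻¹ :=
        (sum_filter _ _).symm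
    _ ≤ ∑ n ∈ Ioo (k - 1) N, ((n : ℝ) ^ 2)⁻¹ :=
        sum_le_sum_of_subset_of_nonneg hsub fun _ _ _ ↦ by positivity
    _ ≤ 2 / ((k - 1 : ℕ) + 1) := sum_Ioo_inv_sq_le _ _
    _ = 2 / k := by rw [Nat.cast_sub hk, Nat.cast_one, sub_add_cancel]
    _ ≤ 2 * c := by
      rw [div_le_iff₀ (by positivity)]
      linarith

lemma tsum_ite_inv_sq_le {c : ℝ} (hc : 0 ≤ c) :
    ∑' n : ℕ, (if 1 ≤ (n : ℝ) * c then ENNReal.ofReal ((n : ℝ) ^ 2)⁻¹ else 0)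
      ≤ 2 * ENNReal.ofReal c := by
  refine ENNReal.tsum_le_of_sum_range_le fun N ↦ ?_
  calc ∑ n ∈ range N, (if 1 ≤ (n : ℝ) * c then ENNReal.ofReal ((n : ℝ) ^ 2)⁻¹ else 0)
      = ENNReal.ofReal
          (∑ n ∈ range N, if 1 ≤ (n : ℝ) * c then ((n : ℝ) ^ 2)⁻¹ else 0) := by
        rw [ENNReal.ofReal_sum_of_nonneg fun _ _ ↦ by positivity]
        exact sum_congr rfl fun n _ ↦ by split_ifs <;> simp
    _ ≤ ENNReal.ofReal (2 * c) := ENNReal.ofReal_le_ofReal (sum_range_ite_inv_sq_le hc N)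
    _ = 2 * ENNReal.ofReal c := by rw [ENNReal.ofReal_mul zero_le_two, ENNReal.ofReal_ofNat]

lemma tsum_ofReal_div_sq_le_lintegral {u : ℕ → ℝ} {g : ℝ → ℝ} (hg : ∀ t, 0 ≤ g t)
    (hug : ∀ n : ℕ, 1 ≤ n → ∀ t, 0 < t → t < u n → 1 ≤ (n : ℝ) * g t) :
    ∑' n, ENNReal.ofReal (u n / n ^ 2) ≤ 2 * ∫⁻ t in Set.Ioi 0, ENNReal.ofReal (g t) := by
  have hterm (n : ℕ) : ENNReal.ofReal (u n / n ^ 2) = ∫⁻ t in Set.Ioi 0,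
      (Set.Ioo 0 (u n)).indicator (fun _ ↦ ENNReal.ofReal ((n : ℝ) ^ 2)⁻¹) t := by
    rw [lintegral_indicator_const measurableSet_Ioo, Measure.restrict_apply measurableSet_Ioo,
      Set.inter_eq_left.mpr Set.Ioo_subset_Ioi_self, Real.volume_Ioo, sub_zero,
      ← ENNReal.ofReal_mul (by positivity), inv_mul_eq_div]
  have hpointwise (n : ℕ) (t : ℝ) :
      (Set.Ioo 0 (u n)).indicator (fun _ ↦ ENNReal.ofReal ((n : ℝ) ^ 2)⁻¹) t ≤
        if 1 ≤ (n : ℝ) * g t then ENNReal.ofReal ((n : ℝ) ^ 2)⁻¹ else 0 := by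
    by_cases ht : t ∈ Set.Ioo 0 (u n)
    · rcases Nat.eq_zero_or_pos n with rfl | hn
      · simp
      · rw [Set.indicator_of_mem ht, if_pos (hug n hn t ht.1 ht.2)]
    · rw [Set.indicator_of_notMem ht]
      exact zero_le
  calc ∑' n, ENNReal.ofReal (u n / n ^ 2)
      = ∫⁻ t in Set.Ioi 0, ∑' n : ℕ,
          (Set.Ioo 0 (u n)).indicator (fun _ ↦ ENNReal.ofReal ((n : ℝ) ^ 2)⁻¹) t := by
        simp_rw [hterm]
        exact (lintegral_tsum fun _ ↦
          (measurable_const.indicator measurableSet_Ioo).aemeasurable).symm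
    _ ≤ ∫⁻ t in Set.Ioi 0, 2 * ENNReal.ofReal (g t) :=
        lintegral_mono fun t ↦
          (ENNReal.tsum_le_tsum (hpointwise · t)).trans (tsum_ite_inv_sq_le (hg t))
    _ = 2 * ∫⁻ t in Set.Ioi 0, ENNReal.ofReal (g t) :=
        lintegral_const_mul' _ _ ENNReal.ofNat_ne_top

/-- If `X` is a nonnegative integrable random variable with quantiles
`u n = inf {t ≥ 0 : P(X > t) < 1/n}`, then `∑_{n=1}^∞ u_n / n² < ∞`. -/
theorem stmt_1 {Ω : Type*} [MeasureSpace Ω] [IsProbabilityMeasure (volume : Measure Ω)]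
    (X : Ω → ℝ) (hXnn : ∀ ω, 0 ≤ X ω) (hXint : Integrable X volume)
    (u : ℕ → ℝ)
    (hu : ∀ n : ℕ, 1 ≤ n →
      u n = sInf {t : ℝ | 0 ≤ t ∧ (volume {ω | t < X ω}).toReal < 1 / (n : ℝ)}) :
    Summable (fun n : ℕ => u n / (n : ℝ) ^ 2) := by
  set g : ℝ → ℝ := fun t ↦ (volume {ω | t < X ω}).toReal
  have hquantile (n : ℕ) (hn : 1 ≤ n) (t : ℝ) (ht : 0 < t) (htu : t < u n) :
      1 ≤ (n : ℝ) * g t := by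
    have := le_of_lt_sInf_setOf_lt (g := g) ht.le (hu n hn ▸ htu)
    rwa [div_le_iff₀' (by positivity)] at this
  have hfinite : ∫⁻ t in Set.Ioi 0, ENNReal.ofReal (g t) ≠ ⊤ := by
    simp only [g, ENNReal.ofReal_toReal (measure_ne_top _ _)]
    rw [← lintegral_eq_lintegral_meas_lt _ (ae_of_all _ hXnn) hXint.aemeasurable]
    exact hXint.lintegral_lt_top.ne
  have hterm_nonneg (n : ℕ) : 0 ≤ u n / (n : ℝ) ^ 2 := by
    rcases Nat.eq_zero_or_pos n with rfl | hn
    · simp -- `u 0` is unconstrained, but the term is `u 0 / 0 = 0`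
    · rw [hu n hn]
      exact div_nonneg (Real.sInf_nonneg fun _ ht ↦ ht.1) (sq_nonneg _)
  refine (ENNReal.summable_toReal ?_).congr fun n ↦ ENNReal.toReal_ofReal (hterm_nonneg n)
  exact ne_top_of_le_ne_top (ENNReal.mul_ne_top ENNReal.ofNat_ne_top hfinite)
    (tsum_ofReal_div_sq_le_lintegral (fun _ ↦ ENNReal.toReal_nonneg) hquantile)
end

section
/- Let Y₁, ..., Y_n be i.i.d. nonnegative real-valued random variables with P(Y₁ > 0) ≤ 1/n. Then E[max_{1 ≤ k ≤ n} Y_k] ≥ (n/2) E[Y₁]. -/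
/-!
Let `B i` be the event that `Y j = 0` for all `j < i`. On `B i ∩ {Y i > 0}` the index `i` is the
first one where `Y` is positive, so these events are disjoint and
`max_k Y_k ≥ ∑ i, Y i · 1_{B i}`. Since `B i` only depends on the `Y j` with `j < i`, independence
gives `E[Y i · 1_{B i}] = E[Y 0] P(B i)`, and the union bound gives `P(B i) ≥ 1 - i p` with
`p = P(Y 0 > 0) ≤ 1/(n+1)`. Summing, `∑ i, P(B i) ≥ (n+1) - n/2 ≥ (n+1)/2`.
-/

open MeasureTheory ProbabilityTheory Finset
open scoped ENNReal

def zeroBefore {Ω ι : Type*} [LT ι] (Y : ι → Ω → ℝ) (i : ι) : Set Ω :=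
  {ω | ∀ j < i, Y j ω = 0}

section

variable {Ω ι : Type*} [Fintype ι] [LinearOrder ι] {Y : ι → Ω → ℝ}

lemma zeroBefore_eq_preimage (i : ι) :
    zeroBefore Y i = (fun ω (j : ↥(univ.filter (· < i))) => Y j ω) ⁻¹' {0} := by
  ext ω
  simp [zeroBefore, funext_iff]

lemma measurableSet_zeroBefore [MeasurableSpace Ω] (hmeas : ∀ i, Measurable (Y i)) (i : ι) :
    MeasurableSet (zeroBefore Y i) := by
  rw [zeroBefore_eq_preimage]
  exact measurable_pi_lambda (fun ω (j : ↥(univ.filter (· < i))) => Y j ω) (fun j => hmeas j)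
    (measurableSet_singleton 0)

lemma sum_ofReal_mul_indicator_zeroBefore_le_sup' [Nonempty ι] (ω : Ω) :
    ∑ i, ENNReal.ofReal (Y i ω) * (zeroBefore Y i).indicator 1 ω ≤
      ENNReal.ofReal (univ.sup' univ_nonempty (fun k => Y k ω)) := by
  set term := fun i => ENNReal.ofReal (Y i ω) * (zeroBefore Y i).indicator 1 ω
  have hterm_le : ∀ i, term i ≤ ENNReal.ofReal (univ.sup' univ_nonempty (fun k => Y k ω)) :=
    fun i => calc
      term i ≤ ENNReal.ofReal (Y i ω) :=
        mul_le_of_le_one_right' (Set.indicator_le (fun _ _ => le_rfl) ω)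
      _ ≤ _ := ENNReal.ofReal_le_ofReal (le_sup' (fun k => Y k ω) (mem_univ i))
  have hterm_ne : ∀ i, term i ≠ 0 → ω ∈ zeroBefore Y i ∧ 0 < Y i ω := by
    intro i hi
    by_contra h
    simp_all [term]
  -- only the first index at which `Y · ω` is positive contributes
  have hunique : ∀ i j, term i ≠ 0 → term j ≠ 0 → i = j := by
    intro i j hi hj
    obtain ⟨hBi, hYi⟩ := hterm_ne i hi
    obtain ⟨hBj, hYj⟩ := hterm_ne j hj
    by_contra hij
    rcases lt_or_gt_of_ne hij with h | h
    · exact hYi.ne' (hBj i h)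
    · exact hYj.ne' (hBi j h)
  by_cases h : ∃ i, term i ≠ 0
  · obtain ⟨i, hi⟩ := h
    rw [sum_eq_single i (fun j _ hji => by_contra fun hj => hji (hunique j i hj hi))
      (absurd (mem_univ i))]
    exact hterm_le i
  · push Not at h
    simp [term, h]

lemma lintegral_ofReal_mul_indicator_zeroBefore [MeasurableSpace Ω] {μ : Measure Ω}
    (hmeas : ∀ i, Measurable (Y i)) (hindep : iIndepFun Y μ) (i : ι) :
    ∫⁻ ω, ENNReal.ofReal (Y i ω) * (zeroBefore Y i).indicator 1 ω ∂μ =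
      (∫⁻ ω, ENNReal.ofReal (Y i ω) ∂μ) * μ (zeroBefore Y i) := by
  have hdisj : Disjoint {i} (univ.filter (· < i)) := by simp
  have hindep' : IndepFun (fun ω => ENNReal.ofReal (Y i ω))
      ((zeroBefore Y i).indicator (1 : Ω → ℝ≥0∞)) μ := by
    rw [zeroBefore_eq_preimage]
    exact (hindep.indepFun_finset _ _ hdisj hmeas).comp
      (ENNReal.measurable_ofReal.comp (measurable_pi_apply ⟨i, mem_singleton_self i⟩))
      (measurable_const (a := (1 : ℝ≥0∞)).indicator (measurableSet_singleton 0))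
  rw [← lintegral_indicator_one (measurableSet_zeroBefore hmeas i)]
  exact lintegral_mul_eq_lintegral_mul_lintegral_of_indepFun (hmeas i).ennreal_ofReal
    (measurable_one.indicator (measurableSet_zeroBefore hmeas i)) hindep'

lemma one_le_measureReal_zeroBefore_add [MeasurableSpace Ω] {μ : Measure Ω}
    [IsProbabilityMeasure μ] (hmeas : ∀ i, Measurable (Y i)) (hnn : ∀ i ω, 0 ≤ Y i ω)
    {p : ℝ} (hp : ∀ j, μ.real {ω | 0 < Y j ω} ≤ p) (i : ι) :
    1 ≤ μ.real (zeroBefore Y i) + #(univ.filter (· < i)) * p := by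
  have hcompl : (zeroBefore Y i)ᶜ ⊆ ⋃ j ∈ univ.filter (· < i), {ω | 0 < Y j ω} := by
    intro ω hω
    simp only [zeroBefore, Set.mem_compl_iff, Set.mem_ofPred_eq, not_forall] at hω
    obtain ⟨j, hj, hYj⟩ := hω
    exact Set.mem_biUnion (by simpa using hj) ((hnn j ω).lt_of_ne' hYj)
  have hcompl_le := calc
    μ.real (zeroBefore Y i)ᶜ ≤ ∑ j ∈ univ.filter (· < i), μ.real {ω | 0 < Y j ω} :=
      (measureReal_mono hcompl (measure_ne_top _ _)).trans (measureReal_biUnion_finset_le _ _)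
    _ ≤ #(univ.filter (· < i)) * p := by
      simpa using sum_le_sum fun j _ => hp j
  rw [measureReal_compl (measurableSet_zeroBefore hmeas i), probReal_univ] at hcompl_le
  linarith

end

lemma sum_fin_cast_val (n : ℕ) : ∑ i : Fin (n + 1), (i : ℝ) = n * (n + 1) / 2 := by
  rw [Fin.sum_univ_eq_sum_range (fun i => (i : ℝ))]
  have h := sum_range_id_mul_two (n + 1)
  have h' : ((∑ i ∈ range (n + 1), i : ℕ) : ℝ) * 2 = (n + 1) * n := by exact_mod_cast h
  push_cast at h'
  linarith

lemma half_le_sum_of_one_le_add_mul {n : ℕ} {q : Fin (n + 1) → ℝ} {p : ℝ}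
    (hp : p ≤ 1 / (n + 1)) (hq : ∀ i, 1 ≤ q i + i * p) : (n + 1) / 2 ≤ ∑ i, q i := by
  have hsum : (n + 1 : ℝ) ≤ ∑ i, q i + n * (n + 1) / 2 * p := by
    simpa [sum_add_distrib, ← sum_mul, sum_fin_cast_val]
      using sum_le_sum (s := univ) fun i _ => hq i
  have : n * (n + 1) / 2 * p ≤ n / 2 := by
    calc n * (n + 1) / 2 * p ≤ n * (n + 1) / 2 * (1 / (n + 1)) := by gcongr
      _ = n / 2 := by field_simp
  linarith

lemma half_le_sum_measure_zeroBefore {Ω : Type*} [MeasurableSpace Ω] {μ : Measure Ω}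
    [IsProbabilityMeasure μ] {n : ℕ} {Y : Fin (n + 1) → Ω → ℝ}
    (hmeas : ∀ i, Measurable (Y i)) (hnn : ∀ i ω, 0 ≤ Y i ω)
    (hp : ∀ i, μ.real {ω | 0 < Y i ω} ≤ 1 / (n + 1)) :
    (n + 1 : ℝ≥0∞) / 2 ≤ ∑ i, μ (zeroBefore Y i) := by
  have hreal : ((n : ℝ) + 1) / 2 ≤ ∑ i, μ.real (zeroBefore Y i) :=
    half_le_sum_of_one_le_add_mul le_rfl fun i => by
      simpa [filter_gt_eq_Iio] using one_le_measureReal_zeroBefore_add hmeas hnn hp i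
  calc (n + 1 : ℝ≥0∞) / 2 = ENNReal.ofReal ((n + 1) / 2) := by
        rw [ENNReal.ofReal_div_of_pos two_pos, ENNReal.ofReal_add (by positivity) zero_le_one]
        simp
    _ ≤ ENNReal.ofReal (∑ i, μ.real (zeroBefore Y i)) := ENNReal.ofReal_le_ofReal hreal
    _ = ∑ i, μ (zeroBefore Y i) := by
        rw [ENNReal.ofReal_sum_of_nonneg fun i _ => measureReal_nonneg]
        exact sum_congr rfl fun i _ => ofReal_measureReal

/-- If `Y₀, ..., Y_n` are i.i.d. nonnegative random variables with
`P(Y₀ > 0) ≤ 1/(n+1)`, then `E[max_k Y_k] ≥ ((n+1)/2) E[Y₀]`. -/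
theorem stmt_3 {Ω : Type*} [MeasureSpace Ω] [IsProbabilityMeasure (volume : Measure Ω)]
    (n : ℕ) (Y : Fin (n + 1) → Ω → ℝ)
    (hmeas : ∀ i, Measurable (Y i))
    (hnn : ∀ i ω, 0 ≤ Y i ω)
    (hindep : iIndepFun Y volume)
    (hident : ∀ i, IdentDistrib (Y i) (Y 0) volume volume)
    (htail : (volume {ω | 0 < Y 0 ω}).toReal ≤ 1 / (n + 1 : ℝ)) :
    ((n + 1 : ℝ≥0∞) / 2) * ∫⁻ ω, ENNReal.ofReal (Y 0 ω) ≤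
      ∫⁻ ω, ENNReal.ofReal (Finset.univ.sup' Finset.univ_nonempty (fun k => Y k ω)) := by
  have hmean : ∀ i, ∫⁻ ω, ENNReal.ofReal (Y i ω) = ∫⁻ ω, ENNReal.ofReal (Y 0 ω) := fun i =>
    ((hident i).comp ENNReal.measurable_ofReal).lintegral_eq
  have htail' : ∀ i, volume.real {ω | 0 < Y i ω} ≤ 1 / (n + 1 : ℝ) := fun i =>
    (congrArg ENNReal.toReal ((hident i).measure_mem_eq measurableSet_Ioi)).trans_le htail
  calc ((n + 1 : ℝ≥0∞) / 2) * ∫⁻ ω, ENNReal.ofReal (Y 0 ω)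
      ≤ (∑ i, volume (zeroBefore Y i)) * ∫⁻ ω, ENNReal.ofReal (Y 0 ω) := by
        gcongr; exact half_le_sum_measure_zeroBefore hmeas hnn htail'
    _ = ∑ i, ∫⁻ ω, ENNReal.ofReal (Y i ω) * (zeroBefore Y i).indicator 1 ω := by
        simp_rw [sum_mul, lintegral_ofReal_mul_indicator_zeroBefore hmeas hindep, hmean, mul_comm]
    _ = ∫⁻ ω, ∑ i, ENNReal.ofReal (Y i ω) * (zeroBefore Y i).indicator 1 ω :=
        (lintegral_finsetSum _ fun i _ => (hmeas i).ennreal_ofReal.mul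
          (measurable_one.indicator (measurableSet_zeroBefore hmeas i))).symm
    _ ≤ _ := lintegral_mono fun ω => sum_ofReal_mul_indicator_zeroBefore_le_sup' ω
end

section
/- Let 1 < p < 2 and φ_p(s) = ∑_{n=1}^∞ (s n^{-1/p} - 1)^+ for s ≥ 0. Then lim_{s → ∞} φ_p(s)/s^p = 1/(p-1). -/
/-! For fixed `s ≥ 1` the summand `x ↦ (s x^{-1/p} - 1)^+` is antitone on `[1, ∞)` and
vanishes from `x = s^p` on, so comparing the sum with the integral gives
`φ_p(s) = ∫_1^{s^p} (s x^{-1/p} - 1) dx + O(s) = s^p/(p-1) + O(s)`,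
and `s = o(s^p)` as `p > 1`. -/

open Filter Real Set MeasureTheory Topology

namespace AntitoneOn

variable {f : ℝ → ℝ} {b : ℝ}

theorem integral_le_tsum_le_add_integral (hf : AntitoneOn f (Ici 1)) (hb : 1 ≤ b)
    (hzero : ∀ x, b ≤ x → f x = 0) :
    ∫ x in 1..b, f x ≤ ∑' n : ℕ, f (n + 1) ∧
      ∑' n : ℕ, f (n + 1) ≤ f 1 + ∫ x in 1..b, f x := by
  set N := ⌈b⌉₊
  have hbN : b ≤ N := Nat.le_ceil b
  have hmono : AntitoneOn f (Icc 1 (1 + N)) := hf.mono Icc_subset_Ici_self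
  have hint : ∫ x in 1..1 + N, f x = ∫ x in 1..b, f x := by
    have hii : ∀ c d, 1 ≤ c → 1 ≤ d → IntervalIntegrable f volume c d := fun c d hc hd =>
      (hf.mono fun x hx => le_trans (le_min hc hd) hx.1).intervalIntegrable
    have htail : ∫ x in b..1 + N, f x = 0 := by
      rw [intervalIntegral.integral_congr (g := fun _ => 0), intervalIntegral.integral_zero]
      intro x hx
      rw [uIcc_of_le (by linarith)] at hx
      exact hzero x hx.1
    rw [← intervalIntegral.integral_add_adjacent_intervals (hii _ _ le_rfl hb)
      (hii _ _ hb (by linarith)), htail, add_zero]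
  have hsum : ∑' n : ℕ, f (n + 1) = ∑ n ∈ Finset.range (N + 1), f (n + 1) :=
    tsum_eq_sum fun n hn => hzero _ <| by
      have : (N : ℝ) + 1 ≤ n := by exact_mod_cast Finset.mem_range.not.mp hn |> not_lt.mp
      linarith
  rw [hsum, ← hint]
  constructor
  · calc ∫ x in 1..1 + N, f x ≤ ∑ i ∈ Finset.range N, f (1 + i) := hmono.integral_le_sum
      _ = ∑ n ∈ Finset.range (N + 1), f (n + 1) := by
        rw [Finset.sum_range_succ, hzero _ (by linarith), add_zero]
        simp only [add_comm]
  · calc ∑ n ∈ Finset.range (N + 1), f (n + 1)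
          = f 1 + ∑ i ∈ Finset.range N, f (1 + ↑(i + 1)) := by
          rw [Finset.sum_range_succ', add_comm]
          simp only [add_comm, Nat.cast_zero, zero_add]
      _ ≤ f 1 + ∫ x in 1..1 + N, f x := by gcongr; exact hmono.sum_le_integral

end AntitoneOn

section

variable {p s x : ℝ}

noncomputable def phiSummand (p s x : ℝ) : ℝ := max (s * x ^ (-(1 / p)) - 1) 0

theorem one_le_mul_rpow_neg_inv_iff (hp : 0 < p) (hs : 0 < s) (hx : 0 < x) :
    1 ≤ s * x ^ (-(1 / p)) ↔ x ≤ s ^ p := by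
  rw [rpow_neg hx.le, ← div_eq_mul_inv, one_le_div (by positivity), one_div,
    rpow_inv_le_iff_of_pos hx.le hs.le hp]

theorem mul_rpow_neg_inv_le_one_iff (hp : 0 < p) (hs : 0 < s) (hx : 0 < x) :
    s * x ^ (-(1 / p)) ≤ 1 ↔ s ^ p ≤ x := by
  rw [rpow_neg hx.le, ← div_eq_mul_inv, div_le_one (by positivity), one_div,
    le_rpow_inv_iff_of_pos hs.le hx.le hp]

theorem phiSummand_eq_zero (hp : 0 < p) (hs : 0 < s) (hx : s ^ p ≤ x) : phiSummand p s x = 0 :=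
  max_eq_right <| sub_nonpos.mpr <|
    (mul_rpow_neg_inv_le_one_iff hp hs ((rpow_pos_of_pos hs p).trans_le hx)).mpr hx

theorem phiSummand_eq_sub (hp : 0 < p) (hs : 0 < s) (hx0 : 0 < x) (hx : x ≤ s ^ p) :
    phiSummand p s x = s * x ^ (-(1 / p)) - 1 :=
  max_eq_left <| sub_nonneg.mpr <| (one_le_mul_rpow_neg_inv_iff hp hs hx0).mpr hx

theorem antitoneOn_phiSummand (hp : 0 < p) (hs : 0 ≤ s) : AntitoneOn (phiSummand p s) (Ioi 0) :=
  fun _ hx _ _ hxy => max_le_max_right _ <| sub_le_sub_right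
    (mul_le_mul_of_nonneg_left (rpow_le_rpow_of_nonpos hx hxy (by simp [hp.le])) hs) _

theorem integral_phiSummand (hp : 1 < p) (hs : 1 ≤ s) :
    ∫ x in 1..s ^ p, phiSummand p s x = s ^ p / (p - 1) - p * s / (p - 1) + 1 := by
  have hs0 : 0 < s := by linarith
  have hsp : 1 ≤ s ^ p := one_le_rpow hs (by linarith)
  have hr : -1 < -(1 / p) := neg_lt_neg ((div_lt_one (by linarith)).mpr hp)
  have hint : IntervalIntegrable (fun x => x ^ (-(1 / p))) volume 1 (s ^ p) :=
    intervalIntegral.intervalIntegrable_rpow' hr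
  have hr1 : -(1 / p) + 1 = (p - 1) / p := by field_simp; ring
  rw [intervalIntegral.integral_congr (g := fun x => s * x ^ (-(1 / p)) - 1)]
  · rw [intervalIntegral.integral_sub (hint.const_mul s) intervalIntegrable_const,
      intervalIntegral.integral_const_mul, integral_rpow (Or.inl hr), integral_one, one_rpow,
      hr1, ← rpow_mul hs0.le, mul_div_cancel₀ _ (by linarith : p ≠ 0), rpow_sub_one hs0.ne']
    field_simp [show p - 1 ≠ 0 by linarith]
    ring
  · intro x hx
    rw [uIcc_of_le hsp] at hx
    exact phiSummand_eq_sub (by linarith) hs0 (by linarith [hx.1]) hx.2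

theorem abs_tsum_phiSummand_sub_le (hp : 1 < p) (hs : 1 ≤ s) :
    |∑' n : ℕ, phiSummand p s (n + 1) - s ^ p / (p - 1)| ≤ p * s / (p - 1) := by
  have hs0 : 0 < s := by linarith
  have hp0 : 0 < p := by linarith
  obtain ⟨hlo, hhi⟩ := ((antitoneOn_phiSummand hp0 hs0.le).mono fun x (hx : 1 ≤ x) =>
    (show (0 : ℝ) < x by linarith)).integral_le_tsum_le_add_integral (one_le_rpow hs hp0.le)
    fun x hx => phiSummand_eq_zero hp0 hs0 hx
  rw [integral_phiSummand hp hs] at hlo hhi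
  have hfirst : phiSummand p s 1 ≤ s := max_le (by simp) hs0.le
  have hs_le : s ≤ p * s / (p - 1) := by
    rw [le_div_iff₀ (by linarith)]; nlinarith
  rw [abs_le]
  constructor <;> linarith

theorem tendsto_div_rpow_of_abs_sub_le {g : ℝ → ℝ} {c C : ℝ} (hp : 1 < p)
    (h : ∀ᶠ s in atTop, |g s - c * s ^ p| ≤ C * s) :
    Tendsto (fun s => g s / s ^ p) atTop (𝓝 c) := by
  rw [tendsto_iff_norm_sub_tendsto_zero]
  have hlim : Tendsto (fun s : ℝ => C * s ^ (-(p - 1))) atTop (𝓝 0) := by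
    simpa only [mul_zero] using (tendsto_rpow_neg_atTop (by linarith)).const_mul C
  refine squeeze_zero' (Eventually.of_forall fun _ => norm_nonneg _) ?_ hlim
  filter_upwards [h, eventually_gt_atTop 0] with s hs hs0
  have hsp : 0 < s ^ p := rpow_pos_of_pos hs0 p
  calc ‖g s / s ^ p - c‖ = |g s - c * s ^ p| / s ^ p := by
        rw [Real.norm_eq_abs, ← abs_of_pos hsp, ← abs_div, abs_of_pos hsp, sub_div,
          mul_div_cancel_right₀ _ hsp.ne']
    _ ≤ C * s / s ^ p := by gcongr
    _ = C * s ^ (-(p - 1)) := by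
        rw [rpow_neg hs0.le, rpow_sub_one hs0.ne', inv_div, mul_div_assoc]

end

theorem stmt_9_general (p : ℝ) (hp : 1 < p)
    (φ : ℝ → ℝ)
    (hφ : ∀ s : ℝ, φ s = ∑' n : ℕ, max (s * ((n : ℝ) + 1) ^ (-(1 / p)) - 1) 0) :
    Tendsto (fun s : ℝ => φ s / s ^ p) atTop (nhds (1 / (p - 1))) := by
  refine tendsto_div_rpow_of_abs_sub_le (C := p / (p - 1)) hp ?_
  filter_upwards [eventually_ge_atTop 1] with s hs
  rw [hφ, one_div_mul_eq_div, div_mul_eq_mul_div]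
  exact abs_tsum_phiSummand_sub_le hp hs

/-- For `1 < p < 2` and `φ_p(s) = ∑_{n≥1} (s n^{-1/p} - 1)^+`,
`φ_p(s)/s^p → 1/(p-1)` as `s → ∞`. -/
theorem stmt_9 (p : ℝ) (hp : 1 < p) (hp2 : p < 2)
    (φ : ℝ → ℝ)
    (hφ : ∀ s : ℝ, φ s = ∑' n : ℕ, max (s * ((n : ℝ) + 1) ^ (-(1 / p)) - 1) 0) :
    Tendsto (fun s : ℝ => φ s / s ^ p) atTop (nhds (1 / (p - 1))) :=
  stmt_9_general p hp φ hφ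
end

section
/- Let Y₁, ..., Y_n be independent real-valued random variables with mean zero and finite expectation of absolute value. Then E[max_{1 ≤ k ≤ n} |Y_k|] ≤ 4 E[|∑_{k=1}^n Y_k|]. -/
/-!
Let `Y'` be an independent copy of `Y` and `X_k = Y_k - Y'_k`. Since `E Y'_k = 0`, Jensen gives
`|Y_k| ≤ E'|Y_k - Y'_k|`, hence `E max_k |Y_k| ≤ E max_k |X_k|`; on the other side
`E |∑ X_k| ≤ 2 E |∑ Y_k|`.

The `X_k` are independent and symmetric, so their joint law is invariant under flipping the sign
of a single coordinate `k`. That flip preserves the event `A_k` that `k` is the first index where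
`|X_j|` is maximal, and turns `S = ∑ X_j` into `S - 2 X_k`. Hence
`2 E[|X_k|; A_k] ≤ E[|S| + |S - 2 X_k|; A_k] = 2 E[|S|; A_k]`, and summing over `k` gives
`E max_k |X_k| ≤ E |S|`. Altogether the constant `2` already suffices.
-/

open MeasureTheory ProbabilityTheory Finset Function

theorem MeasureTheory.Integrable.finset_sup' {α ι β : Type*} [MeasurableSpace α]
    {μ : Measure α} [NormedAddCommGroup β] [Lattice β] [HasSolidNorm β] [IsOrderedAddMonoid β]
    {s : Finset ι} (hs : s.Nonempty) {f : ι → α → β} (hf : ∀ i ∈ s, Integrable (f i) μ) :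
    Integrable (fun x => s.sup' hs fun i => f i x) μ := by
  have h : (fun x => s.sup' hs fun i => f i x) = s.sup' hs f := by ext; simp [Finset.sup'_apply]
  exact h ▸ Finset.sup'_induction hs f (p := (Integrable · μ)) (fun _ h₁ _ h₂ => h₁.sup h₂) hf

section SignFlip

variable {ι : Type*} [LinearOrder ι]

def firstAbsArgmax (k : ι) : Set (ι → ℝ) :=
  {x | (∀ j, |x j| ≤ |x k|) ∧ ∀ j < k, |x j| < |x k|}

theorem measurableSet_firstAbsArgmax [Countable ι] (k : ι) :
    MeasurableSet (firstAbsArgmax k) := by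
  simp only [firstAbsArgmax, Set.ofPred_and, Set.ofPred_forall]
  exact .inter (.iInter fun j => measurableSet_le (by fun_prop) (by fun_prop))
    (.iInter fun j => .iInter fun _ => measurableSet_lt (by fun_prop) (by fun_prop))

theorem pairwise_disjoint_firstAbsArgmax : Pairwise (Disjoint on firstAbsArgmax (ι := ι)) := by
  intro k l hkl
  refine Set.disjoint_left.2 fun x hk hl => ?_
  rcases hkl.lt_or_gt with h | h
  · exact (hl.2 k h).not_ge (hk.1 l)
  · exact (hk.2 l h).not_ge (hl.1 k)

theorem iUnion_firstAbsArgmax [Fintype ι] [Nonempty ι] :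
    ⋃ k, firstAbsArgmax (ι := ι) k = Set.univ := by
  refine Set.eq_univ_of_forall fun x => Set.mem_iUnion.2 ?_
  let maximizers := univ.filter fun k => ∀ j, |x j| ≤ |x k|
  have hne : maximizers.Nonempty := by
    obtain ⟨k, -, hk⟩ := univ.exists_max_image (fun k => |x k|) univ_nonempty
    exact ⟨k, mem_filter.2 ⟨mem_univ k, fun j => hk j (mem_univ j)⟩⟩
  have hmin := (mem_filter.1 (maximizers.min'_mem hne)).2
  refine ⟨maximizers.min' hne, hmin, fun j hj => lt_of_not_ge fun hle => ?_⟩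
  exact hj.not_ge (maximizers.min'_le j (mem_filter.2 ⟨mem_univ j, fun i => (hmin i).trans hle⟩))

theorem sup'_abs_eq_of_mem_firstAbsArgmax [Fintype ι] [Nonempty ι] {k : ι} {x : ι → ℝ}
    (hx : x ∈ firstAbsArgmax k) : univ.sup' univ_nonempty (fun j => |x j|) = |x k| :=
  le_antisymm (sup'_le _ _ fun j _ => hx.1 j) (le_sup' (fun j => |x j|) (mem_univ k))

theorem integral_eq_sum_setIntegral_firstAbsArgmax [Fintype ι] [Nonempty ι] {E : Type*}
    [NormedAddCommGroup E] [NormedSpace ℝ E] {ρ : Measure (ι → ℝ)} {f : (ι → ℝ) → E}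
    (hf : Integrable f ρ) : ∫ x, f x ∂ρ = ∑ k, ∫ x in firstAbsArgmax k, f x ∂ρ := by
  rw [← integral_iUnion_fintype measurableSet_firstAbsArgmax pairwise_disjoint_firstAbsArgmax
    fun _ => hf.integrableOn, iUnion_firstAbsArgmax, setIntegral_univ]

def signFlip (k : ι) (x : ι → ℝ) : ι → ℝ := fun j => if j = k then -x j else x j

theorem abs_signFlip (k : ι) (x : ι → ℝ) (j : ι) : |signFlip k x j| = |x j| := by
  unfold signFlip; split_ifs <;> simp

theorem signFlip_mem_firstAbsArgmax_iff (k l : ι) (x : ι → ℝ) :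
    signFlip k x ∈ firstAbsArgmax l ↔ x ∈ firstAbsArgmax l := by
  simp only [firstAbsArgmax, Set.mem_ofPred_eq, abs_signFlip]

theorem sum_signFlip [Fintype ι] (k : ι) (x : ι → ℝ) :
    ∑ j, signFlip k x j = ∑ j, x j - 2 * x k := by
  have h : ∀ j, signFlip k x j = x j - if j = k then 2 * x k else 0 := by
    intro j
    unfold signFlip
    split_ifs with h
    · subst h; ring
    · ring
  simp only [h, sum_sub_distrib, sum_ite_eq', mem_univ, if_true]

theorem signFlip_involutive (k : ι) : Involutive (signFlip k) := by
  intro x; ext j; unfold signFlip; split_ifs <;> simp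

theorem measurable_signFlip (k : ι) : Measurable (signFlip k) :=
  measurable_pi_lambda _ fun j => by unfold signFlip; split_ifs <;> fun_prop

theorem measurableEmbedding_signFlip (k : ι) : MeasurableEmbedding (signFlip k) :=
  (MeasurableEquiv.ofInvolutive _ (signFlip_involutive k) (measurable_signFlip k)).measurableEmbedding

theorem measurePreserving_signFlip_pi [Fintype ι] {ν : ι → Measure ℝ} [∀ i, SigmaFinite (ν i)]
    (hν : ∀ i, (ν i).map Neg.neg = ν i) (k : ι) :
    MeasurePreserving (signFlip k) (Measure.pi ν) (Measure.pi ν) := by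
  refine measurePreserving_pi ν ν (f := fun j y => if j = k then -y else y) fun j => ?_
  split_ifs
  · exact ⟨measurable_neg, hν j⟩
  · exact MeasurePreserving.id _

theorem setIntegral_abs_le_setIntegral_abs_sum [Fintype ι] {ρ : Measure (ι → ℝ)} {k : ι}
    (hρ : MeasurePreserving (signFlip k) ρ ρ) {A : Set (ι → ℝ)} (hA : signFlip k ⁻¹' A = A)
    (hint : ∀ j, Integrable (fun x => x j) ρ) :
    ∫ x in A, |x k| ∂ρ ≤ ∫ x in A, |∑ j, x j| ∂ρ := by
  have hS : Integrable (fun x => ∑ j, x j) ρ := integrable_finsetSum _ fun j _ => hint j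
  have hD : Integrable (fun x => |∑ j, x j - 2 * x k|) ρ := (hS.sub ((hint k).const_mul 2)).abs
  have hflip : ∫ x in A, |∑ j, x j - 2 * x k| ∂ρ = ∫ x in A, |∑ j, x j| ∂ρ := by
    simpa only [hA, sum_signFlip] using
      hρ.setIntegral_preimage_emb (measurableEmbedding_signFlip k) (fun x => |∑ j, x j|) A
  have hle : ∫ x in A, 2 * |x k| ∂ρ ≤ ∫ x in A, (|∑ j, x j| + |∑ j, x j - 2 * x k|) ∂ρ := by
    refine setIntegral_mono ((hint k).abs.const_mul 2).integrableOn
      (hS.abs.add hD).integrableOn fun x => ?_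
    calc 2 * |x k| = |∑ j, x j - (∑ j, x j - 2 * x k)| := by rw [sub_sub_cancel, abs_mul]; norm_num
      _ ≤ _ := abs_sub _ _
  rw [integral_const_mul, integral_add hS.abs.integrableOn hD.integrableOn, hflip] at hle
  linarith

theorem integral_sup_abs_le_integral_abs_sum_of_measurePreserving_signFlip [Fintype ι]
    [Nonempty ι] {ρ : Measure (ι → ℝ)} (hρ : ∀ k, MeasurePreserving (signFlip k) ρ ρ)
    (hint : ∀ j, Integrable (fun x => x j) ρ) :
    ∫ x, univ.sup' univ_nonempty (fun k => |x k|) ∂ρ ≤ ∫ x, |∑ k, x k| ∂ρ := by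
  rw [integral_eq_sum_setIntegral_firstAbsArgmax (Integrable.finset_sup' _ fun k _ => (hint k).abs),
    integral_eq_sum_setIntegral_firstAbsArgmax (integrable_finsetSum _ fun k _ => hint k).abs]
  refine sum_le_sum fun k _ => ?_
  rw [setIntegral_congr_fun (measurableSet_firstAbsArgmax k)
    fun x hx => sup'_abs_eq_of_mem_firstAbsArgmax hx]
  exact setIntegral_abs_le_setIntegral_abs_sum (hρ k)
    (Set.ext fun x => signFlip_mem_firstAbsArgmax_iff k k x) hint

end SignFlip

theorem integral_sup_abs_le_integral_abs_sum_of_iIndepFun {Ω ι : Type*} [MeasurableSpace Ω]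
    {μ : Measure Ω} [IsProbabilityMeasure μ] [Fintype ι] [LinearOrder ι] [Nonempty ι]
    {X : ι → Ω → ℝ} (hint : ∀ i, Integrable (X i) μ) (hindep : iIndepFun X μ)
    (hsymm : ∀ i, IdentDistrib (fun ω => -X i ω) (X i) μ μ) :
    ∫ ω, univ.sup' univ_nonempty (fun k => |X k ω|) ∂μ ≤ ∫ ω, |∑ k, X k ω| ∂μ := by
  have hX : AEMeasurable (fun ω i => X i ω) μ :=
    aemeasurable_pi_lambda _ fun i => (hint i).aemeasurable
  have hlaw := hindep.map_fun_eq_pi_map fun i => (hint i).aemeasurable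
  have hneg : ∀ i, (μ.map (X i)).map Neg.neg = μ.map (X i) := fun i => by
    rw [AEMeasurable.map_map_of_aemeasurable measurable_neg.aemeasurable (hint i).aemeasurable]
    exact (hsymm i).map_eq
  have hcoord : ∀ j, Integrable (fun x : ι → ℝ => x j) (μ.map fun ω i => X i ω) := fun j =>
    (integrable_map_measure (measurable_pi_apply j).aestronglyMeasurable hX).2 (hint j)
  rw [← integral_map hX (f := fun x => univ.sup' univ_nonempty fun k => |x k|)
      (Continuous.finset_sup'_apply _ fun k _ => (continuous_apply k).abs).aestronglyMeasurable,
    ← integral_map hX (f := fun x => |∑ k, x k|) (by fun_prop)]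
  exact integral_sup_abs_le_integral_abs_sum_of_measurePreserving_signFlip
    (fun k => hlaw ▸ measurePreserving_signFlip_pi hneg k) hcoord

theorem ProbabilityTheory.iIndepFun.prodMk_fst_snd {Ω Ω' ι β γ : Type*} [Fintype ι]
    [MeasurableSpace Ω] [MeasurableSpace Ω'] [MeasurableSpace β] [MeasurableSpace γ]
    {μ : Measure Ω} {ν : Measure Ω'} [IsProbabilityMeasure μ] [IsProbabilityMeasure ν]
    {f : ι → Ω → β} {g : ι → Ω' → γ} (hf : iIndepFun f μ) (hg : iIndepFun g ν)
    (hfm : ∀ i, Measurable (f i)) (hgm : ∀ i, Measurable (g i)) :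
    iIndepFun (fun i p => (f i p.1, g i p.2)) (μ.prod ν) := by
  have hF : Measurable fun ω i => f i ω := measurable_pi_lambda _ hfm
  have hG : Measurable fun ω i => g i ω := measurable_pi_lambda _ hgm
  rw [iIndepFun_iff_map_fun_eq_pi_map fun i => by fun_prop]
  have hpair : ∀ i, (μ.prod ν).map (fun p => (f i p.1, g i p.2)) =
      (μ.map (f i)).prod (ν.map (g i)) :=
    fun i => (Measure.map_prod_map μ ν (hfm i) (hgm i)).symm
  simp_rw [hpair]
  rw [← (measurePreserving_arrowProdEquivProdArrow β γ ι _ _).symm.map_eq,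
    ← hf.map_fun_eq_pi_map fun i => (hfm i).aemeasurable,
    ← hg.map_fun_eq_pi_map fun i => (hgm i).aemeasurable, Measure.map_prod_map μ ν hF hG,
    Measure.map_map (MeasurableEquiv.measurable _) (hF.prodMap hG)]
  rfl

theorem identDistrib_neg_sub_fst_snd {Ω : Type*} [MeasurableSpace Ω] {μ : Measure Ω}
    [SFinite μ] {f : Ω → ℝ} (hf : Measurable f) :
    IdentDistrib (fun p : Ω × Ω => -(f p.1 - f p.2)) (fun p => f p.1 - f p.2)
      (μ.prod μ) (μ.prod μ) where
  aemeasurable_fst := by fun_prop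
  aemeasurable_snd := by fun_prop
  map_eq := by
    have h : (fun p : Ω × Ω => -(f p.1 - f p.2)) = (fun p => f p.1 - f p.2) ∘ Prod.swap := by
      ext; simp
    rw [h, ← Measure.map_map (by fun_prop) measurable_swap, Measure.prod_swap]

theorem integral_sup_abs_le_integral_sup_abs_sub {Ω ι : Type*} [MeasurableSpace Ω]
    {μ : Measure Ω} [IsProbabilityMeasure μ] [Fintype ι] [Nonempty ι] {Y : ι → Ω → ℝ}
    (hint : ∀ i, Integrable (Y i) μ) (hmean : ∀ i, ∫ ω, Y i ω ∂μ = 0) :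
    ∫ ω, univ.sup' univ_nonempty (fun k => |Y k ω|) ∂μ ≤
      ∫ p, univ.sup' univ_nonempty (fun k => |Y k p.1 - Y k p.2|) ∂(μ.prod μ) := by
  set G : Ω × Ω → ℝ := fun p => univ.sup' univ_nonempty fun k => |Y k p.1 - Y k p.2|
  have hG : Integrable G (μ.prod μ) :=
    Integrable.finset_sup' _ fun k _ => ((hint k).comp_fst μ |>.sub ((hint k).comp_snd μ)).abs
  have hsection : ∀ ω, Integrable (fun ω' => G (ω, ω')) μ := fun ω =>
    Integrable.finset_sup' _ fun k _ => ((integrable_const (Y k ω)).sub (hint k)).abs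
  have hpoint : ∀ ω, univ.sup' univ_nonempty (fun k => |Y k ω|) ≤ ∫ ω', G (ω, ω') ∂μ :=
    fun ω => sup'_le _ _ fun k _ => calc
      |Y k ω| = |∫ ω', (Y k ω - Y k ω') ∂μ| := by
        rw [integral_sub (integrable_const _) (hint k), hmean, integral_const]; simp
      _ ≤ ∫ ω', |Y k ω - Y k ω'| ∂μ := abs_integral_le_integral_abs
      _ ≤ ∫ ω', G (ω, ω') ∂μ := integral_mono ((integrable_const _).sub (hint k)).abs
          (hsection ω) fun ω' => le_sup' (fun j => |Y j ω - Y j ω'|) (mem_univ k)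
  calc ∫ ω, univ.sup' univ_nonempty (fun k => |Y k ω|) ∂μ
      ≤ ∫ ω, ∫ ω', G (ω, ω') ∂μ ∂μ :=
        integral_mono (Integrable.finset_sup' _ fun k _ => (hint k).abs) hG.integral_prod_left
          hpoint
    _ = ∫ p, G p ∂(μ.prod μ) := (integral_prod G hG).symm

theorem integral_abs_sub_le_two_mul {Ω : Type*} [MeasurableSpace Ω] {μ : Measure Ω}
    [IsProbabilityMeasure μ] {f : Ω → ℝ} (hf : Integrable f μ) :
    ∫ p, |f p.1 - f p.2| ∂(μ.prod μ) ≤ 2 * ∫ ω, |f ω| ∂μ := by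
  have h₁ := hf.abs.comp_fst μ
  have h₂ := hf.abs.comp_snd μ
  calc ∫ p, |f p.1 - f p.2| ∂(μ.prod μ) ≤ ∫ p, (|f p.1| + |f p.2|) ∂(μ.prod μ) :=
        integral_mono ((hf.comp_fst μ).sub (hf.comp_snd μ)).abs (h₁.add h₂) fun p => abs_sub _ _
    _ = 2 * ∫ ω, |f ω| ∂μ := by
        rw [integral_add h₁ h₂, integral_fun_fst (fun ω => |f ω|),
          integral_fun_snd (fun ω => |f ω|)]
        simp only [probReal_univ, one_smul]
        ring

/-- If `Y₀, ..., Y_n` are independent integrable mean-zero random variables, then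
`E[max_k |Y_k|] ≤ 4 E[|∑_k Y_k|]`. -/
theorem stmt_13 {Ω : Type*} [MeasureSpace Ω] [IsProbabilityMeasure (volume : Measure Ω)]
    (n : ℕ) (Y : Fin (n + 1) → Ω → ℝ)
    (hmeas : ∀ i, Measurable (Y i))
    (hint : ∀ i, Integrable (Y i) volume)
    (hmean : ∀ i, ∫ ω, Y i ω = 0)
    (hindep : iIndepFun Y volume) :
    ∫ ω, Finset.univ.sup' Finset.univ_nonempty (fun k => |Y k ω|) ≤
      4 * ∫ ω, |∑ k, Y k ω| := by
  set P := (volume : Measure Ω).prod (volume : Measure Ω)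
  have hindep₂ : iIndepFun (fun k (p : Ω × Ω) => Y k p.1 - Y k p.2) P :=
    (hindep.prodMk_fst_snd hindep hmeas hmeas).comp (fun _ q => q.1 - q.2)
      fun _ => measurable_fst.sub measurable_snd
  calc ∫ ω, univ.sup' univ_nonempty (fun k => |Y k ω|)
      ≤ ∫ p, univ.sup' univ_nonempty (fun k => |Y k p.1 - Y k p.2|) ∂P :=
        integral_sup_abs_le_integral_sup_abs_sub hint hmean
    _ ≤ ∫ p, |∑ k, (Y k p.1 - Y k p.2)| ∂P :=
        integral_sup_abs_le_integral_abs_sum_of_iIndepFun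
          (fun k => ((hint k).comp_fst _).sub ((hint k).comp_snd _)) hindep₂
          fun k => identDistrib_neg_sub_fst_snd (hmeas k)
    _ = ∫ p, |(∑ k, Y k p.1) - ∑ k, Y k p.2| ∂P := by simp only [sum_sub_distrib]
    _ ≤ 2 * ∫ ω, |∑ k, Y k ω| :=
        integral_abs_sub_le_two_mul (integrable_finsetSum _ fun k _ => hint k)
    _ ≤ 4 * ∫ ω, |∑ k, Y k ω| := by
        have : 0 ≤ ∫ ω, |∑ k, Y k ω| := integral_nonneg fun ω => abs_nonneg _
        linarith
end

section
/- Let X be a random variable with P(|X| > t) = e^{ep+1} / (t^p (ln t)(ln ln t)^α) for t ≥ e^e (and appropriately defined for t < e^e), where 1 < p < 2 and α > 1. Then E[|X|^p] < ∞ but ∫_0^∞ P(|X| > t)^{1/p} dt = ∞. -/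
open MeasureTheory
open scoped ENNReal

/-!
By the layer-cake formula `E|X|^p = p ∫ t^(p-1) P(|X| > t) dt`, and beyond `e^e` the integrand is
`C / (t ln t (ln ln t)^α)`, the derivative of `-C (ln ln t)^(1-α) / (α-1)`, which has a finite
limit. The `p`-th root of the tail is `C^(1/p) / (t (ln t)^(1/p) (ln ln t)^(α/p))`; since `ln ln t`
grows slower than any power of `ln t`, this eventually dominates a multiple of the derivative of
`(ln t)^δ` for `δ = (1 - 1/p)/2`, and `(ln t)^δ → ∞`.
-/

open Real Set Filter Asymptotics Topology

lemma one_lt_log_of_exp_one_lt {t : ℝ} (ht : exp 1 < t) : 1 < log t :=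
  (lt_log_iff_exp_lt ((exp_pos 1).trans ht)).2 ht

lemma exp_one_lt_exp_exp_one : exp 1 < exp (exp 1) :=
  exp_lt_exp.2 (by linarith [add_one_lt_exp one_ne_zero])

lemma pos_and_log_pos_and_log_log_pos {t : ℝ} (ht : exp (exp 1) < t) :
    0 < t ∧ 0 < log t ∧ 0 < log (log t) := by
  have hlog := one_lt_log_of_exp_one_lt (exp_one_lt_exp_exp_one.trans ht)
  exact ⟨(exp_pos _).trans ht, zero_lt_one.trans hlog, log_pos hlog⟩

lemma integrableOn_Ioi_inv_mul_log_mul_log_log_rpow {a α : ℝ} (ha : exp 1 < a) (hα : 1 < α) :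
    IntegrableOn (fun t => (t * log t * log (log t) ^ α)⁻¹) (Ioi a) := by
  have hderiv : ∀ t ∈ Ici a, HasDerivAt (fun t => -(α - 1)⁻¹ * log (log t) ^ (1 - α))
      (t * log t * log (log t) ^ α)⁻¹ t := by
    intro t ht
    have hlog : 1 < log t := one_lt_log_of_exp_one_lt (ha.trans_le ht)
    have hloglog : 0 < log (log t) := log_pos hlog
    have ht0 : t ≠ 0 := ((exp_pos 1).trans_le (ha.le.trans ht)).ne'
    refine ((((hasDerivAt_log ht0).log (by linarith)).rpow_const
      (p := 1 - α) (Or.inl hloglog.ne')).const_mul (-(α - 1)⁻¹)).congr_deriv ?_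
    rw [show 1 - α - 1 = -α by ring, rpow_neg hloglog.le]
    field_simp [(by linarith : α - 1 ≠ 0)]
    ring
  have hnonneg : ∀ t ∈ Ioi a, 0 ≤ (t * log t * log (log t) ^ α)⁻¹ := by
    intro t ht
    have hlog : 1 < log t := one_lt_log_of_exp_one_lt (ha.trans ht)
    have : 0 < t := (exp_pos 1).trans (ha.trans ht)
    have := log_pos hlog
    positivity
  have hlim : Tendsto (fun t => log (log t) ^ (1 - α)) atTop (𝓝 0) := by
    simpa [Function.comp_def] using (tendsto_rpow_neg_atTop (by linarith : 0 < α - 1)).comp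
      (tendsto_log_atTop.comp tendsto_log_atTop)
  exact integrableOn_Ioi_deriv_of_nonneg' hderiv hnonneg (hlim.const_mul _)

lemma lintegral_ofReal_abs_rpow_lt_top_of_integrableOn_Ioi {Ω : Type*} [MeasurableSpace Ω]
    {μ : Measure Ω} [IsFiniteMeasure μ] {X : Ω → ℝ} (hX : AEMeasurable X μ) {p a : ℝ}
    (hp : 0 < p) (h : IntegrableOn (fun t => t ^ (p - 1) * μ.real {ω | t < |X ω|}) (Ioi a)) :
    ∫⁻ ω, ENNReal.ofReal (|X ω| ^ p) ∂μ < ∞ := by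
  have htail : Measurable fun t : ℝ => μ.real {ω | t < |X ω|} :=
    Antitone.measurable fun s t hst => measureReal_mono fun ω hω => hst.trans_lt hω
  have hnear : IntegrableOn (fun t => t ^ (p - 1) * μ.real {ω | t < |X ω|}) (Ioc 0 a) := by
    refine Integrable.mono' (((intervalIntegral.intervalIntegrable_rpow' (r := p - 1)
      (by linarith)).def'.mono_set Ioc_subset_uIoc).mul_const (μ.real univ))
      ((measurable_id.pow_const _).mul htail).aestronglyMeasurable ?_
    filter_upwards [ae_restrict_mem measurableSet_Ioc] with t ht
    have := ht.1.le
    rw [norm_of_nonneg (by positivity)]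
    exact mul_le_mul_of_nonneg_left (measureReal_mono (μ := μ) (subset_univ _)) (by positivity)
  have hint : IntegrableOn (fun t => t ^ (p - 1) * μ.real {ω | t < |X ω|}) (Ioi 0) :=
    (hnear.union h).mono_set fun t ht => (le_or_gt t a).imp (fun hta => ⟨ht, hta⟩) id
  rw [lintegral_rpow_eq_lintegral_meas_lt_mul μ (ae_of_all _ fun ω => abs_nonneg _) hX.abs hp]
  refine ENNReal.mul_lt_top ENNReal.ofReal_lt_top (lt_of_eq_of_lt ?_ hint.lintegral_lt_top)
  refine setLIntegral_congr_fun measurableSet_Ioi fun t ht => ?_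
  rw [ENNReal.ofReal_mul (rpow_nonneg ht.le _), ofReal_measureReal, mul_comm]

lemma eventually_log_log_rpow_le_log_rpow (γ : ℝ) {δ : ℝ} (hδ : 0 < δ) :
    ∀ᶠ t in atTop, log (log t) ^ γ ≤ log t ^ δ := by
  filter_upwards [tendsto_log_atTop.eventually ((isLittleO_log_rpow_rpow_atTop γ hδ).bound one_pos),
    tendsto_log_atTop.eventually (eventually_ge_atTop 0)] with t h h0
  simpa [abs_of_nonneg (rpow_nonneg h0 δ)] using (le_abs_self _).trans h

lemma not_integrableOn_Ioi_inv_mul_log_rpow_mul_log_log_rpow (a : ℝ) {β : ℝ} (hβ : β < 1)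
    (γ : ℝ) : ¬IntegrableOn (fun t => (t * log t ^ β * log (log t) ^ γ)⁻¹) (Ioi a) := by
  set δ := (1 - β) / 2
  have hδ : 0 < δ := by simp only [δ]; linarith
  have hderiv : ∀ t, 1 < t → HasDerivAt (fun t => log t ^ δ) (t⁻¹ * δ * log t ^ (δ - 1)) t :=
    fun t ht => (hasDerivAt_log (by positivity)).rpow_const (Or.inl (log_pos ht).ne')
  refine not_integrableOn_of_tendsto_norm_atTop_of_deriv_isBigO_filter atTop (Ioi_mem_atTop a)
    ((eventually_gt_atTop 1).mono fun t ht => (hderiv t ht).differentiableAt)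
    (tendsto_norm_atTop_atTop.comp ((tendsto_rpow_atTop hδ).comp tendsto_log_atTop))
    (IsBigO.of_bound δ ?_)
  filter_upwards [eventually_gt_atTop (exp 1), eventually_log_log_rpow_le_log_rpow γ hδ]
    with t ht hle
  have hlog : 0 < log t := zero_lt_one.trans (one_lt_log_of_exp_one_lt ht)
  have hloglog : 0 < log (log t) := log_pos (one_lt_log_of_exp_one_lt ht)
  have ht0 : 0 < t := (exp_pos 1).trans ht
  have hpow : log t ^ (δ - 1) = (log t ^ β * log t ^ δ)⁻¹ := by
    rw [← rpow_add hlog, ← rpow_neg hlog.le]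
    congr 1
    simp only [δ]
    ring
  rw [(hderiv t (by linarith [add_one_lt_exp one_ne_zero])).deriv, hpow,
    norm_of_nonneg (by positivity), norm_of_nonneg (by positivity), mul_comm t⁻¹, mul_assoc,
    ← mul_inv, ← mul_assoc t]
  gcongr

lemma div_rpow_mul_mul_rpow_one_div {C t y z p α : ℝ} (hC : 0 ≤ C) (ht : 0 < t) (hy : 0 ≤ y)
    (hz : 0 ≤ z) (hp : p ≠ 0) :
    (C / (t ^ p * y * z ^ α)) ^ (1 / p) = C ^ (1 / p) * (t * y ^ (1 / p) * z ^ (α / p))⁻¹ := by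
  rw [div_rpow hC (by positivity), mul_rpow (by positivity) (by positivity),
    mul_rpow (by positivity) hy, ← rpow_mul ht.le, ← rpow_mul hz, mul_one_div_cancel hp, rpow_one,
    mul_one_div, div_eq_mul_inv]

theorem stmt_16_general {Ω : Type*} [MeasureSpace Ω] [IsProbabilityMeasure (volume : Measure Ω)]
    (p α : ℝ) (hp : 1 < p) (hα : 1 < α)
    (X : Ω → ℝ) (hXmeas : Measurable X)
    (htail : ∀ t : ℝ, Real.exp (Real.exp 1) ≤ t →
      (volume {ω | t < |X ω|}).toReal =
        Real.exp (Real.exp 1 * p + 1) /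
          (t ^ p * Real.log t * (Real.log (Real.log t)) ^ α)) :
    (∫⁻ ω, ENNReal.ofReal (|X ω| ^ p)) < ∞ ∧
      (∫⁻ t in Set.Ioi (0 : ℝ),
        ENNReal.ofReal ((volume {ω | t < |X ω|}).toReal ^ (1 / p))) = ∞ := by
  set C := exp (exp 1 * p + 1)
  refine ⟨lintegral_ofReal_abs_rpow_lt_top_of_integrableOn_Ioi hXmeas.aemeasurable
    (a := exp (exp 1)) (by linarith) ?_, ?_⟩
  · refine IntegrableOn.congr_fun
      ((integrableOn_Ioi_inv_mul_log_mul_log_log_rpow exp_one_lt_exp_exp_one hα).const_mul C)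
      (fun t ht => ?_) measurableSet_Ioi
    obtain ⟨ht0, hlog, hloglog⟩ := pos_and_log_pos_and_log_log_pos ht
    rw [measureReal_def, htail t ht.le, rpow_sub_one ht0.ne']
    field_simp
  have hK : 0 < C ^ (1 / p) := by positivity
  have hdiv : ∫⁻ t in Ioi (exp (exp 1)),
      ENNReal.ofReal ((volume {ω | t < |X ω|}).toReal ^ (1 / p)) = ∞ := by
    rw [setLIntegral_congr_fun measurableSet_Ioi fun t ht => by
      obtain ⟨ht0, hlog, hloglog⟩ := pos_and_log_pos_and_log_log_pos ht
      rw [htail t ht.le, div_rpow_mul_mul_rpow_one_div (exp_pos _).le ht0 hlog.le hloglog.le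
        (by positivity)]]
    refine not_ne_iff.1 fun hfin => not_integrableOn_Ioi_inv_mul_log_rpow_mul_log_log_rpow _
      ((div_lt_one (by positivity)).2 hp) (α / p) ((integrable_const_mul_iff hK.ne'.isUnit _).1
      ((lintegral_ofReal_ne_top_iff_integrable (by fun_prop) ?_).1 hfin))
    filter_upwards [ae_restrict_mem measurableSet_Ioi] with t ht
    obtain ⟨ht0, hlog, hloglog⟩ := pos_and_log_pos_and_log_log_pos ht
    positivity
  exact top_unique (hdiv ▸ lintegral_mono_set (Ioi_subset_Ioi (exp_pos _).le))

/-- If `P(|X| > t) = e^{ep+1} / (t^p (ln t)(ln ln t)^α)` for `t ≥ e^e`, with `1 < p < 2`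
and `α > 1`, then `E|X|^p < ∞` but `∫_0^∞ P(|X| > t)^{1/p} dt = ∞`. -/
theorem stmt_16 {Ω : Type*} [MeasureSpace Ω] [IsProbabilityMeasure (volume : Measure Ω)]
    (p α : ℝ) (hp : 1 < p) (hp2 : p < 2) (hα : 1 < α)
    (X : Ω → ℝ) (hXmeas : Measurable X)
    (htail : ∀ t : ℝ, Real.exp (Real.exp 1) ≤ t →
      (volume {ω | t < |X ω|}).toReal =
        Real.exp (Real.exp 1 * p + 1) /
          (t ^ p * Real.log t * (Real.log (Real.log t)) ^ α)) :
    (∫⁻ ω, ENNReal.ofReal (|X ω| ^ p)) < ∞ ∧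
      (∫⁻ t in Set.Ioi (0 : ℝ),
        ENNReal.ofReal ((volume {ω | t < |X ω|}).toReal ^ (1 / p))) = ∞ :=
  stmt_16_general p α hp hα X hXmeas htail
end

section
/- Let {X_n; n ≥ 1} be i.i.d. real-valued random variables with E[|X₁|^p] < ∞, where 0 < p < 1, and S_n = X₁ + ⋯ + X_n. Then ∑_{n=1}^∞ (1/n)(|S_n|/n^{1/p}) < ∞ almost surely. -/
/-!
Since `|S_n| ≤ ∑_{i ≤ n} |X_i|`, exchanging the order of summation bounds the series by a
constant times `∑_i |X_i| / i^{1/p}`, because the tail `∑_{n ≥ i} n^{-1-1/p}` is of order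
`i^{-1/p}`. That series converges almost surely: with `F_n(x) = min (|x| / n^{1/p}) 1` one has
`∑_n F_n(x) ≤ C |x|^p` (here `1/p > 1` is used), so `E ∑_n F_n(X_n) ≤ C E|X_1|^p < ∞`. Hence
`∑_n F_n(X_n) < ∞` a.s., which forces `F_n(X_n) = |X_n| / n^{1/p}` for all large `n`.
-/

open MeasureTheory ProbabilityTheory Finset

lemma mul_rpow_neg_one_add_le_sub {r x : ℝ} (hr : 0 ≤ r) (hx : 0 < x) :
    r * (x + 1) ^ (-(1 + r)) ≤ x ^ (-r) - (x + 1) ^ (-r) := by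
  obtain ⟨c, ⟨hxc, hcx⟩, hc⟩ := exists_hasDerivAt_eq_slope (fun y => -y ^ (-r))
    (fun y => r * y ^ (-(1 + r))) (lt_add_one x)
    (fun y hy => (ContinuousAt.rpow_const continuousAt_id
      (Or.inl (hx.trans_le hy.1).ne')).continuousWithinAt.neg)
    (fun y hy => by
      refine (Real.hasDerivAt_rpow_const (Or.inl (hx.trans hy.1).ne')).neg.congr_deriv ?_
      rw [show -(1 + r) = -r - 1 by ring]
      ring)
  have hc_le : (x + 1) ^ (-(1 + r)) ≤ c ^ (-(1 + r)) :=
    Real.rpow_le_rpow_of_nonpos (hx.trans hxc) hcx.le (by linarith)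
  calc r * (x + 1) ^ (-(1 + r)) ≤ r * c ^ (-(1 + r)) := mul_le_mul_of_nonneg_left hc_le hr
    _ = x ^ (-r) - (x + 1) ^ (-r) := by rw [hc]; ring

lemma sum_Ico_rpow_neg_one_add_le {r : ℝ} (hr : 0 < r) (m N : ℕ) :
    ∑ n ∈ Ico m N, ((n : ℝ) + 1) ^ (-(1 + r)) ≤ (1 + 1 / r) * ((m : ℝ) + 1) ^ (-r) := by
  rcases le_or_gt N m with hNm | hmN
  · rw [Ico_eq_empty_of_le hNm, sum_empty]
    positivity
  have hhead : ((m : ℝ) + 1) ^ (-(1 + r)) ≤ ((m : ℝ) + 1) ^ (-r) :=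
    Real.rpow_le_rpow_of_exponent_le (le_add_of_nonneg_left m.cast_nonneg) (by linarith)
  set f : ℕ → ℝ := fun n => -(n : ℝ) ^ (-r)
  have htail : ∑ n ∈ Ico (m + 1) N, ((n : ℝ) + 1) ^ (-(1 + r)) ≤ 1 / r * ((m : ℝ) + 1) ^ (-r) :=
    calc ∑ n ∈ Ico (m + 1) N, ((n : ℝ) + 1) ^ (-(1 + r))
        ≤ ∑ n ∈ Ico (m + 1) N, 1 / r * (f (n + 1) - f n) := by
          refine sum_le_sum fun n hn => ?_
          have hn0 : (0 : ℝ) < n := Nat.cast_pos.2 (by have := (mem_Ico.1 hn).1; omega)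
          have := mul_rpow_neg_one_add_le_sub hr.le hn0
          simp only [f]
          push_cast
          rw [div_mul_eq_mul_div, le_div_iff₀' hr]
          linarith
      _ = 1 / r * (f N - f (m + 1)) := by rw [← mul_sum, sum_Ico_sub f hmN]
      _ ≤ 1 / r * ((m : ℝ) + 1) ^ (-r) := by
          simp only [f]
          push_cast
          have : 0 ≤ (N : ℝ) ^ (-r) := by positivity
          gcongr
          linarith
  rw [sum_eq_sum_Ico_succ_bot hmN]
  linarith

lemma summable_inv_mul_sum_range_div_rpow {q : ℝ} (hq : 0 < q) {a : ℕ → ℝ} (ha : ∀ i, 0 ≤ a i)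
    (h : Summable fun i : ℕ => a i / ((i : ℝ) + 1) ^ q) :
    Summable fun n : ℕ => 1 / ((n : ℝ) + 1) * ((∑ i ∈ range (n + 1), a i) / ((n : ℝ) + 1) ^ q) := by
  have hterm (n : ℕ) : 1 / ((n : ℝ) + 1) * ((∑ i ∈ range (n + 1), a i) / ((n : ℝ) + 1) ^ q)
      = ∑ i ∈ range (n + 1), a i * ((n : ℝ) + 1) ^ (-(1 + q)) := by
    rw [← sum_mul, Real.rpow_neg (by positivity), Real.rpow_add (by positivity), Real.rpow_one]
    field_simp
  simp_rw [hterm]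
  refine summable_of_sum_range_le (c := (1 + 1 / q) * ∑' i, a i / ((i : ℝ) + 1) ^ q)
    (fun n => sum_nonneg fun i _ => mul_nonneg (ha i) (by positivity)) fun N => ?_
  calc ∑ n ∈ range N, ∑ i ∈ range (n + 1), a i * ((n : ℝ) + 1) ^ (-(1 + q))
      = ∑ i ∈ range N, a i * ∑ n ∈ Ico i N, ((n : ℝ) + 1) ^ (-(1 + q)) := by
        simp_rw [mul_sum]
        refine sum_comm' fun n i => ?_
        simp only [mem_range, mem_Ico]
        omega
    _ ≤ ∑ i ∈ range N, (1 + 1 / q) * (a i / ((i : ℝ) + 1) ^ q) := by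
        refine sum_le_sum fun i _ => ?_
        calc a i * ∑ n ∈ Ico i N, ((n : ℝ) + 1) ^ (-(1 + q))
            ≤ a i * ((1 + 1 / q) * ((i : ℝ) + 1) ^ (-q)) :=
              mul_le_mul_of_nonneg_left (sum_Ico_rpow_neg_one_add_le hq i N) (ha i)
          _ = (1 + 1 / q) * (a i / ((i : ℝ) + 1) ^ q) := by
              rw [Real.rpow_neg (by positivity)]
              ring
    _ ≤ (1 + 1 / q) * ∑' i, a i / ((i : ℝ) + 1) ^ q := by
        rw [← mul_sum]
        gcongr
        exact h.sum_le_tsum _ fun i _ => by have := ha i; positivity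

lemma mul_rpow_neg_le_rpow {p t y : ℝ} (hp : 0 < p) (hp1 : p ≤ 1) (ht : 0 ≤ t) (hy : t ^ p ≤ y) :
    t * y ^ (-(1 / p - 1)) ≤ t ^ p := by
  rcases ht.eq_or_lt with rfl | ht
  · simp [Real.zero_rpow hp.ne']
  have htp : 0 < t ^ p := Real.rpow_pos_of_pos ht p
  have hexp : -(1 / p - 1) ≤ 0 := by
    rw [neg_nonpos, sub_nonneg, le_div_iff₀ hp]
    linarith
  calc t * y ^ (-(1 / p - 1)) ≤ t * (t ^ p) ^ (-(1 / p - 1)) :=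
        mul_le_mul_of_nonneg_left (Real.rpow_le_rpow_of_nonpos htp hy hexp) ht.le
    _ = t ^ p := by
        rw [← Real.rpow_mul ht.le, show p * -(1 / p - 1) = p - 1 by field_simp; ring,
          Real.rpow_sub_one ht.ne']
        field_simp

lemma sum_range_min_div_rpow_le {p : ℝ} (hp : 0 < p) (hp1 : p < 1) {t : ℝ} (ht : 0 ≤ t) (N : ℕ) :
    ∑ n ∈ range N, min (t / ((n : ℝ) + 1) ^ (1 / p)) 1 ≤ (2 + 1 / (1 / p - 1)) * t ^ p := by
  set r := 1 / p - 1 with hr_def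
  have hr : 0 < r := by rw [hr_def, sub_pos, lt_div_iff₀ hp]; linarith
  -- below `m` the terms are at most `1`, from `m` on they follow the tail of a `p`-series
  set m := ⌊t ^ p⌋₊
  have hterm_nonneg (n : ℕ) : 0 ≤ min (t / ((n : ℝ) + 1) ^ (1 / p)) 1 :=
    le_min (by positivity) zero_le_one
  have hhead : ∑ n ∈ range m, min (t / ((n : ℝ) + 1) ^ (1 / p)) 1 ≤ t ^ p :=
    calc ∑ n ∈ range m, min (t / ((n : ℝ) + 1) ^ (1 / p)) 1 ≤ ∑ n ∈ range m, (1 : ℝ) :=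
          sum_le_sum fun n _ => min_le_right _ _
      _ ≤ t ^ p := by simpa using Nat.floor_le (by positivity)
  have htail (M : ℕ) : ∑ n ∈ Ico m M, min (t / ((n : ℝ) + 1) ^ (1 / p)) 1 ≤ (1 + 1 / r) * t ^ p :=
    calc ∑ n ∈ Ico m M, min (t / ((n : ℝ) + 1) ^ (1 / p)) 1
        ≤ ∑ n ∈ Ico m M, t * ((n : ℝ) + 1) ^ (-(1 + r)) := by
          refine sum_le_sum fun n _ => (min_le_left _ _).trans_eq ?_
          rw [Real.rpow_neg (by positivity), hr_def, add_sub_cancel, div_eq_mul_inv]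
      _ ≤ t * ((1 + 1 / r) * ((m : ℝ) + 1) ^ (-r)) := by
          rw [← mul_sum]
          exact mul_le_mul_of_nonneg_left (sum_Ico_rpow_neg_one_add_le hr m M) ht
      _ ≤ (1 + 1 / r) * t ^ p := by
          rw [mul_left_comm]
          gcongr
          exact mul_rpow_neg_le_rpow hp hp1.le ht (Nat.lt_floor_add_one _).le
  calc ∑ n ∈ range N, min (t / ((n : ℝ) + 1) ^ (1 / p)) 1
      ≤ ∑ n ∈ range (max m N), min (t / ((n : ℝ) + 1) ^ (1 / p)) 1 :=
        sum_le_sum_of_subset_of_nonneg (range_mono (le_max_right m N))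
          fun n _ _ => hterm_nonneg n
    _ = ∑ n ∈ range m, min (t / ((n : ℝ) + 1) ^ (1 / p)) 1
          + ∑ n ∈ Ico m (max m N), min (t / ((n : ℝ) + 1) ^ (1 / p)) 1 :=
        (sum_range_add_sum_Ico _ (le_max_left m N)).symm
    _ ≤ (2 + 1 / r) * t ^ p := by linarith [htail (max m N)]

lemma summable_of_summable_min_one {ι : Type*} {f : ι → ℝ} (h : Summable fun i => min (f i) 1) :
    Summable f := by
  refine h.congr_cofinite ?_
  filter_upwards [h.tendsto_cofinite_zero.eventually (gt_mem_nhds one_pos)] with i hi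
  exact min_eq_left ((min_lt_iff.1 hi).resolve_right (lt_irrefl 1)).le

lemma ae_summable_abs_div_rpow {Ω Ω' : Type*} [MeasurableSpace Ω] [MeasurableSpace Ω']
    {μ : Measure Ω} {ν : Measure Ω'} {p : ℝ} (hp : 0 < p) (hp1 : p < 1)
    {X : ℕ → Ω → ℝ} {Y : Ω' → ℝ} (hident : ∀ n, IdentDistrib (X n) Y μ ν)
    (hmom : Integrable (fun ω => |Y ω| ^ p) ν) :
    ∀ᵐ ω ∂μ, Summable fun n : ℕ => |X n ω| / ((n : ℝ) + 1) ^ (1 / p) := by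
  set F : ℕ → ℝ → ℝ := fun n x => min (|x| / ((n : ℝ) + 1) ^ (1 / p)) 1
  have hF_meas (n : ℕ) : Measurable (F n) := by
    simp only [F]
    fun_prop
  have hF_nonneg (n : ℕ) (x : ℝ) : 0 ≤ F n x := le_min (by positivity) zero_le_one
  set C := 2 + 1 / (1 / p - 1)
  have hF_tsum (x : ℝ) : ∑' n, ENNReal.ofReal (F n x) ≤ ENNReal.ofReal (C * |x| ^ p) := by
    have hsum := sum_range_min_div_rpow_le hp hp1 (abs_nonneg x)
    rw [← ENNReal.ofReal_tsum_of_nonneg (hF_nonneg · x)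
      (summable_of_sum_range_le (hF_nonneg · x) hsum)]
    exact ENNReal.ofReal_le_ofReal (Real.tsum_le_of_sum_range_le (hF_nonneg · x) hsum)
  have hX_meas (n : ℕ) : AEMeasurable (fun ω => ENNReal.ofReal (F n (X n ω))) μ :=
    ((hF_meas n).comp_aemeasurable (hident n).aemeasurable_fst).ennreal_ofReal
  have hY_meas (n : ℕ) : AEMeasurable (fun y => ENNReal.ofReal (F n (Y y))) ν :=
    ((hF_meas n).comp_aemeasurable (hident n).aemeasurable_snd).ennreal_ofReal
  have hfin : ∫⁻ ω, ∑' n, ENNReal.ofReal (F n (X n ω)) ∂μ < ⊤ :=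
    calc ∫⁻ ω, ∑' n, ENNReal.ofReal (F n (X n ω)) ∂μ
        = ∑' n, ∫⁻ ω, ENNReal.ofReal (F n (X n ω)) ∂μ := lintegral_tsum hX_meas
      _ = ∑' n, ∫⁻ y, ENNReal.ofReal (F n (Y y)) ∂ν :=
        tsum_congr fun n => ((hident n).comp (hF_meas n).ennreal_ofReal).lintegral_eq
      _ = ∫⁻ y, ∑' n, ENNReal.ofReal (F n (Y y)) ∂ν := (lintegral_tsum hY_meas).symm
      _ ≤ ∫⁻ y, ENNReal.ofReal (C * |Y y| ^ p) ∂ν := lintegral_mono fun y => hF_tsum (Y y)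
      _ < ⊤ := (hmom.const_mul C).lintegral_lt_top
  filter_upwards [ae_lt_top' (AEMeasurable.tsum hX_meas) hfin.ne] with ω hω
  exact summable_of_summable_min_one <| (ENNReal.summable_toReal hω.ne).congr fun n =>
    ENNReal.toReal_ofReal (hF_nonneg n (X n ω))

theorem stmt_17_general {Ω : Type*} [MeasureSpace Ω]
    (p : ℝ) (hp : 0 < p) (hp1 : p < 1)
    (X : ℕ → Ω → ℝ)
    (hident : ∀ n, IdentDistrib (X n) (X 0) volume volume)
    (hmom : Integrable (fun ω => |X 0 ω| ^ p) volume) :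
    ∀ᵐ ω ∂(volume : Measure Ω),
      Summable (fun n : ℕ =>
        (1 / ((n : ℝ) + 1)) *
          (|∑ i ∈ Finset.range (n + 1), X i ω| / ((n : ℝ) + 1) ^ (1 / p))) := by
  filter_upwards [ae_summable_abs_div_rpow hp hp1 hident hmom] with ω hω
  refine Summable.of_nonneg_of_le (fun n => by positivity) (fun n => ?_)
    (summable_inv_mul_sum_range_div_rpow (by positivity) (fun i => abs_nonneg (X i ω)) hω)
  gcongr
  exact abs_sum_le_sum_abs _ _

/-- If `{X_n}` are i.i.d. real random variables with `E|X₁|^p < ∞`, `0 < p < 1`, then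
`∑_{n≥1} (1/n)(|S_n|/n^{1/p}) < ∞` almost surely. -/
theorem stmt_17 {Ω : Type*} [MeasureSpace Ω] [IsProbabilityMeasure (volume : Measure Ω)]
    (p : ℝ) (hp : 0 < p) (hp1 : p < 1)
    (X : ℕ → Ω → ℝ) (hmeas : ∀ n, Measurable (X n))
    (hindep : iIndepFun X volume)
    (hident : ∀ n, IdentDistrib (X n) (X 0) volume volume)
    (hmom : Integrable (fun ω => |X 0 ω| ^ p) volume) :
    ∀ᵐ ω ∂(volume : Measure Ω),
      Summable (fun n : ℕ =>
        (1 / ((n : ℝ) + 1)) *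
          (|∑ i ∈ Finset.range (n + 1), X i ω| / ((n : ℝ) + 1) ^ (1 / p))) :=
  stmt_17_general p hp hp1 X hident hmom
end

section
/- Let X be a real-valued random variable with E[X] = 0 and E[|X| ln(1 + |X|)] < ∞. Then ∑_{n=1}^∞ |E[X · 1{|X| ≤ n}]| / n < ∞. -/
open MeasureTheory

lemma aux_harmonic_bound (x : ℝ) (hx : 0 ≤ x) (N : ℕ) :
    ∑ n ∈ Finset.range N, (if (n : ℝ) + 1 < x then x else 0) / ((n : ℝ) + 1)
      ≤ x + x * Real.log (1 + x) := by
  set m := ⌊x⌋₊ with hm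
  have hlog : 0 ≤ Real.log (1 + x) := Real.log_nonneg (by linarith)
  have step1 : ∑ n ∈ Finset.range N, (if (n : ℝ) + 1 < x then x else 0) / ((n : ℝ) + 1)
      ≤ ∑ n ∈ Finset.range m, x / ((n : ℝ) + 1) := by
    have hsub : Finset.range N ⊆ Finset.range (max N m) :=
      Finset.range_subset_range.2 (le_max_left _ _)
    calc ∑ n ∈ Finset.range N, (if (n : ℝ) + 1 < x then x else 0) / ((n : ℝ) + 1)
        ≤ ∑ n ∈ Finset.range (max N m),
            (if (n : ℝ) + 1 < x then x else 0) / ((n : ℝ) + 1) := by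
          apply Finset.sum_le_sum_of_subset_of_nonneg hsub
          intro n _ _
          positivity
      _ ≤ ∑ n ∈ Finset.range (max N m), (if n < m then x / ((n : ℝ) + 1) else 0) := by
          apply Finset.sum_le_sum
          intro n _
          by_cases h : (n : ℝ) + 1 < x
          · have hn : n < m := by
              have : (n : ℕ) + 1 ≤ m := Nat.le_floor (by push_cast; linarith)
              omega
            simp [h, hn]
          · rw [if_neg h]
            have h0 : (0:ℝ) / ((n:ℝ)+1) = 0 := by simp
            rw [h0]
            by_cases hn : n < m <;> simp [hn] <;> positivity
      _ = ∑ n ∈ Finset.range m, x / ((n : ℝ) + 1) := by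
          rw [← Finset.sum_subset (Finset.range_subset_range.2 (le_max_right N m))]
          · exact Finset.sum_congr rfl fun n hn => by simp [Finset.mem_range.1 hn]
          · intro n _ hn
            have : ¬ n < m := fun h => hn (Finset.mem_range.2 h)
            simp [this]
  have step2 : ∑ n ∈ Finset.range m, x / ((n : ℝ) + 1) = x * (harmonic m : ℝ) := by
    rw [harmonic]
    push_cast
    rw [Finset.mul_sum]
    exact Finset.sum_congr rfl fun n _ => by rw [div_eq_mul_inv]
  have step3 : x * (harmonic m : ℝ) ≤ x + x * Real.log (1 + x) := by
    rcases Nat.eq_zero_or_pos m with h0 | hpos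
    · simp [h0]
      positivity
    · have h1 : (harmonic m : ℝ) ≤ 1 + Real.log m := harmonic_le_one_add_log m
      have h2 : Real.log m ≤ Real.log (1 + x) := by
        apply Real.log_le_log (by positivity)
        have : (m : ℝ) ≤ x := Nat.floor_le hx
        linarith
      calc x * (harmonic m : ℝ) ≤ x * (1 + Real.log (1 + x)) := by
            apply mul_le_mul_of_nonneg_left _ hx
            linarith
        _ = x + x * Real.log (1 + x) := by ring
  linarith

/-- If `X` is a real random variable with `E X = 0` and `E[|X| ln(1+|X|)] < ∞`, then
`∑_{n≥1} |E[X 1{|X| ≤ n}]| / n < ∞`. -/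
theorem stmt_19 {Ω : Type*} [MeasureSpace Ω] [IsProbabilityMeasure (volume : Measure Ω)]
    (X : Ω → ℝ) (hXmeas : Measurable X) (hXint : Integrable X volume)
    (hmean : ∫ ω, X ω = 0)
    (hmom : Integrable (fun ω => |X ω| * Real.log (1 + |X ω|)) volume) :
    Summable (fun n : ℕ =>
      |∫ ω in {ω | |X ω| ≤ ((n : ℝ) + 1)}, X ω| / ((n : ℝ) + 1)) := by
  set S : ℕ → Set Ω := fun n => {ω | |X ω| ≤ (n : ℝ) + 1} with hSdef
  have hS : ∀ n, MeasurableSet (S n) := fun n =>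
    measurableSet_le hXmeas.abs measurable_const
  -- the dominating sequence
  set F : ℕ → Ω → ℝ := fun n ω =>
    (S n)ᶜ.indicator (fun ω => |X ω|) ω / ((n : ℝ) + 1) with hFdef
  have hFint : ∀ n, Integrable (F n) volume := fun n =>
    ((hXint.abs).indicator (hS n).compl).div_const _
  have hFnonneg : ∀ n ω, 0 ≤ F n ω := by
    intro n ω
    apply div_nonneg _ (by positivity)
    exact Set.indicator_nonneg (fun ω _ => abs_nonneg _) ω
  have hgint : ∀ n, (∫ ω, F n ω) = (∫ ω in (S n)ᶜ, |X ω|) / ((n : ℝ) + 1) := by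
    intro n
    rw [hFdef]
    simp only
    rw [integral_div, integral_indicator (hS n).compl]
  -- step 1: the target is pointwise bounded by ∫ F n
  have hbound : ∀ n, |∫ ω in S n, X ω| / ((n : ℝ) + 1) ≤ ∫ ω, F n ω := by
    intro n
    rw [hgint n]
    have hsplit : (∫ ω in S n, X ω) + ∫ ω in (S n)ᶜ, X ω = 0 := by
      rw [integral_add_compl (hS n) hXint]; exact hmean
    have heq : ∫ ω in S n, X ω = -∫ ω in (S n)ᶜ, X ω := by linarith
    have habs : |∫ ω in S n, X ω| ≤ ∫ ω in (S n)ᶜ, |X ω| := by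
      rw [heq, abs_neg]
      simpa [Real.norm_eq_abs] using
        norm_integral_le_integral_norm (μ := volume.restrict (S n)ᶜ) X
    gcongr
  -- step 2: ∑ ∫ F n is summable via uniform partial-sum bound
  have hsummable : Summable fun n => ∫ ω, F n ω := by
    apply summable_of_sum_range_le (c := ∫ ω, (|X ω| + |X ω| * Real.log (1 + |X ω|)))
    · intro n
      exact integral_nonneg (hFnonneg n)
    · intro N
      rw [← integral_finset_sum _ (fun n _ => hFint n)]
      apply integral_mono (integrable_finset_sum _ (fun n _ => hFint n))
        (hXint.abs.add hmom)
      intro ω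
      simp only
      have hmem : ∀ n : ℕ, (S n)ᶜ.indicator (fun ω => |X ω|) ω
          = if (n : ℝ) + 1 < |X ω| then |X ω| else 0 := by
        intro n
        rw [Set.indicator_apply]
        congr 1
        simp [hSdef, Set.mem_compl_iff, not_le, eq_iff_iff]
      calc ∑ n ∈ Finset.range N, F n ω
          = ∑ n ∈ Finset.range N,
              (if (n : ℝ) + 1 < |X ω| then |X ω| else 0) / ((n : ℝ) + 1) := by
            exact Finset.sum_congr rfl fun n _ => by rw [hFdef]; simp only; rw [hmem n]
        _ ≤ |X ω| + |X ω| * Real.log (1 + |X ω|) :=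
            aux_harmonic_bound _ (abs_nonneg _) N
  -- conclude
  exact Summable.of_nonneg_of_le (fun n => by positivity) hbound hsummable
end
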